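/- arXiv:1601.03987 — 5 statements merged into one kernel-verified Lean document; each statement's English description precedes it below -/
import Mathlib

section
/- Let S = ((t_1,a_1),…,(t_w,a_w)) be a NE-pattern. Then J_{t_1}(a_1)⋯J_{t_w}(a_w) = ⋂_{(u,b)} J_u(b)^{e_{ub}(S)}, the intersection taken over all pairs (u,b) of positive integers with u ≤ m and u + b ≤ n + 1 (where the 0-th power of an ideal is the unit ideal R). -/
open MvPolynomial

/-- The `t`-minor of the generic `m × n` matrix of indeterminates with rows `1,…,t`
(0-indexed `0,…,t-1`) and columns given by `c`. -/
noncomputable def minorP (K : Type*) [Field K] (m n : ℕ) {t : ℕ} (c : Fin t → Fin n) :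
    MvPolynomial (Fin m × Fin n) K :=
  Matrix.det (Matrix.of fun i j : Fin t =>
    if h : (i : ℕ) < m then (X (⟨(i : ℕ), h⟩, c j) : MvPolynomial (Fin m × Fin n) K) else 0)

/-- Admissible column selections for a `t`-minor (or diagonal) of `X_t(a)`:
strictly increasing columns, all with (1-indexed) column number `≥ a`. -/
def NEcols (n t a : ℕ) (c : Fin t → Fin n) : Prop :=
  StrictMono c ∧ ∀ j, a ≤ (c j : ℕ) + 1

/-- The northeast ideal `I_t(a)`, generated by the `t`-minors of `X_t(a)`. -/
noncomputable def NEIdeal (K : Type*) [Field K] (m n t a : ℕ) :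
    Ideal (MvPolynomial (Fin m × Fin n) K) :=
  Ideal.span {f | ∃ c : Fin t → Fin n, NEcols n t a c ∧ f = minorP K m n c}

/-- The diagonal monomial `x_{1 b₁} ⋯ x_{t b_t}` with columns `c`. -/
noncomputable def diagP (K : Type*) [Field K] (m n : ℕ) {t : ℕ} (c : Fin t → Fin n) :
    MvPolynomial (Fin m × Fin n) K :=
  ∏ j : Fin t,
    if h : (j : ℕ) < m then (X (⟨(j : ℕ), h⟩, c j) : MvPolynomial (Fin m × Fin n) K) else 0

/-- The monomial ideal `J_t(a)` generated by the diagonals of type `(t,a)`. -/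
noncomputable def JIdeal (K : Type*) [Field K] (m n t a : ℕ) :
    Ideal (MvPolynomial (Fin m × Fin n) K) :=
  Ideal.span {f | ∃ c : Fin t → Fin n, NEcols n t a c ∧ f = diagP K m n c}

/-- A valid pair `(t,a)`: `1 ≤ t`, `1 ≤ a`, `t ≤ m`, `t + a ≤ n + 1`. -/
def ValidPair (m n : ℕ) (p : ℕ × ℕ) : Prop :=
  1 ≤ p.1 ∧ 1 ≤ p.2 ∧ p.1 ≤ m ∧ p.1 + p.2 ≤ n + 1

/-- A NE-pattern: a list of valid pairs, ordered with weakly increasing `a` and,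
for equal `a`, weakly decreasing `t`. -/
def IsNEPattern (m n : ℕ) (S : List (ℕ × ℕ)) : Prop :=
  (∀ p ∈ S, ValidPair m n p) ∧
    S.Pairwise fun p q => p.2 ≤ q.2 ∧ (p.2 = q.2 → q.1 ≤ p.1)

/-- The ideal `I_S`, product of the `I_{t_i}(a_i)` over the pattern `S`. -/
noncomputable def ISIdeal (K : Type*) [Field K] (m n : ℕ) (S : List (ℕ × ℕ)) :
    Ideal (MvPolynomial (Fin m × Fin n) K) :=
  (S.map fun p => NEIdeal K m n p.1 p.2).prod

/-- `e_{ub}(S) = #{i : b ≤ a_i and u ≤ t_i}`. -/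
def eCount (S : List (ℕ × ℕ)) (u b : ℕ) : ℕ :=
  S.countP fun p => decide (b ≤ p.2 ∧ u ≤ p.1)

/-!
Both sides are monomial ideals, so it suffices to compare exponent vectors `ν`. A monomial lies
in `J_{t_1}(a_1)⋯J_{t_w}(a_w)` iff `ν` contains disjoint diagonals of the types `(t_i, a_i)`, and
in `J_u(b)^e` iff it contains `e` disjoint diagonals of type `(u, b)`; truncating diagonals
gives `⊆`.

For `⊇`, peel off the last pair `(t, a)` of the pattern, which has the largest `a`, using the
greatest chain `D` of length `t` in `ν` (the pointwise maximum of all chains of occupied cells).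
After sorting the rows of a packing, `e + 1` disjoint diagonals of type `(u, b)` with `u ≤ t`
still leave `e` of them in `ν - D`; for `u > t`, a packing by `(u, b)`-diagonals is repaired by
row-wise minima with a packing of `ν - D` by `(t, b)`-diagonals. So `ν - D` satisfies the
conditions `e_{ub}` of the shorter pattern, and induction applies.
-/

open Finset Pointwise

section SortedTuples

variable {α : Type*} [LinearOrder α] {e : ℕ}

lemma Fin.antitone_of_val_succ_le {u : ℕ} {f : Fin u → α}
    (h : ∀ i i' : Fin u, (i' : ℕ) = i + 1 → f i' ≤ f i) : Antitone f := by
  cases u with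
  | zero => exact fun i => i.elim0
  | succ u => exact Fin.antitone_iff_succ_le.2 fun i => h _ _ (by simp)

lemma Fin.succAbove_le_succAbove_of_le {p p' : Fin (e + 1)} (h : p ≤ p') (i : Fin e) :
    p'.succAbove i ≤ p.succAbove i := by
  rw [Fin.le_iff_val_le_val] at h ⊢
  simp only [Fin.succAbove, Fin.lt_def, Fin.val_castSucc]
  split_ifs <;> simp only [Fin.val_castSucc, Fin.val_succ] <;> omega

lemma Tuple.sort_lt_sort {f g : Fin e → α} (h : ∀ k, f k < g k) (l : Fin e) :
    f (Tuple.sort f l) < g (Tuple.sort g l) := by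
  set w := g (Tuple.sort g l)
  by_contra! hw
  have below : (Iic l).image (Tuple.sort g) ⊆ univ.filter (fun k => f k < w) := by
    intro k hk
    obtain ⟨l', hl', rfl⟩ := mem_image.1 hk
    exact mem_filter.2 ⟨mem_univ _, (h _).trans_le (Tuple.monotone_sort g (mem_Iic.1 hl'))⟩
  have above : univ.filter (fun k => f k < w) ⊆ (Iio l).image (Tuple.sort f) := by
    intro k hk
    refine mem_image.2 ⟨(Tuple.sort f).symm k, mem_Iio.2 ?_, by simp⟩
    by_contra! hl
    have := Tuple.monotone_sort f hl
    simp only [Function.comp_apply, Equiv.apply_symm_apply] at this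
    exact (mem_filter.1 hk).2.not_ge (hw.trans this)
  have := card_le_card (below.trans above)
  rw [card_image_of_injective _ (Tuple.sort g).injective,
    card_image_of_injective _ (Tuple.sort f).injective, Fin.card_Iic, Fin.card_Iio] at this
  omega

/-- For a sorted tuple, the position of the last entry `≤ d` (`0` if there is none). -/
def lastLE (g : Fin (e + 1) → α) (d : α) : Fin (e + 1) :=
  ⟨#{k | g k ≤ d} - 1, by
    have := card_filter_le univ fun k => g k ≤ d
    simp only [card_univ, Fintype.card_fin] at this
    omega⟩

lemma val_lastLE (g : Fin (e + 1) → α) (d : α) : (lastLE g d : ℕ) = #{k | g k ≤ d} - 1 := rfl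

lemma le_lastLE {g : Fin (e + 1) → α} (hg : Monotone g) {d : α} {k : Fin (e + 1)}
    (hk : g k ≤ d) : k ≤ lastLE g d := by
  have : Iic k ⊆ univ.filter (fun k => g k ≤ d) := fun k' hk' =>
    mem_filter.2 ⟨mem_univ _, (hg (mem_Iic.1 hk')).trans hk⟩
  have := card_le_card this
  rw [Fin.card_Iic] at this
  rw [Fin.le_iff_val_le_val, val_lastLE]
  omega

lemma apply_lastLE_le {g : Fin (e + 1) → α} (hg : Monotone g) {d : α} {k : Fin (e + 1)}
    (hk : g k ≤ d) : g (lastLE g d) ≤ d := by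
  by_contra! hlt
  have : univ.filter (fun k => g k ≤ d) ⊆ Iio (lastLE g d) := fun k' hk' => by
    refine mem_Iio.2 (lt_of_not_ge fun hle => ?_)
    exact (hlt.trans_le (hg hle)).not_ge (mem_filter.1 hk').2
  have h1 := card_le_card this
  have h2 : 0 < #{k | g k ≤ d} := card_pos.2 ⟨k, mem_filter.2 ⟨mem_univ _, hk⟩⟩
  rw [Fin.card_Iio, val_lastLE] at h1
  omega

lemma apply_lastLE_eq {g : Fin (e + 1) → α} (hg : Monotone g) {d : α} {k : Fin (e + 1)}
    (hk : g k = d) : g (lastLE g d) = d :=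
  le_antisymm (apply_lastLE_le hg hk.le) (hk.symm.trans_le (hg (le_lastLE hg hk.le)))

lemma lastLE_le_lastLE {g g' : Fin (e + 1) → α} {d d' : α} (h : ∀ k, g' k ≤ d' → g k ≤ d) :
    lastLE g' d' ≤ lastLE g d := by
  have := card_le_card (s := {k | g' k ≤ d'}) (t := {k | g k ≤ d})
    fun k hk => mem_filter.2 ⟨mem_univ _, h k (mem_filter.1 hk).2⟩
  rw [Fin.le_iff_val_le_val, val_lastLE, val_lastLE]
  omega

lemma card_succAbove_add (g : Fin (e + 1) → α) (p : Fin (e + 1)) (j : α) :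
    #{l | g (p.succAbove l) = j} + (if g p = j then 1 else 0) = #{k | g k = j} := by
  rw [card_filter, card_filter, Fin.sum_univ_succAbove _ p, add_comm]

/-- Deleting the entry at `lastLE g d` from a sorted tuple `g` removes one copy of `d` whenever
`g` has one. -/
lemma card_succAbove_lastLE_le {g : Fin (e + 1) → α} (hg : Monotone g) (d j : α) {N : ℕ}
    (hN : #{k | g k = j} ≤ N) (hd : d = j → 1 ≤ N) :
    #{l | g ((lastLE g d).succAbove l) = j} ≤ N - if d = j then 1 else 0 := by
  have hcount := card_succAbove_add g (lastLE g d) j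
  by_cases hdj : d = j
  · subst hdj
    by_cases hq : g (lastLE g d) = d
    · simp only [hq, if_true] at hcount ⊢
      omega
    · have : #{k | g k = d} = 0 :=
        card_eq_zero.2 (filter_eq_empty_iff.2 fun k _ hk => hq (apply_lastLE_eq hg hk))
      omega
  · rw [if_neg hdj]
    omega

/-- In two sorted tuples, the entries equal to `j` of the pointwise minimum all come from one
of them. -/
lemma card_min_eq_le {a g : Fin e → α} (ha : Monotone a) (hg : Monotone g) (j : α) :
    #{l | min (a l) (g l) = j} ≤ max #{l | a l = j} #{l | g l = j} := by
  by_cases hex : ∃ l', min (a l') (g l') = j ∧ g l' ≠ j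
  · obtain ⟨l', hl'm, hl'g⟩ := hex
    have hl'a : a l' = j :=
      (min_choice _ _).resolve_right (fun h => hl'g (h ▸ hl'm.symm).symm) ▸ hl'm
    have hjg : j < g l' := lt_of_le_of_ne (hl'm ▸ min_le_right _ _) (Ne.symm hl'g)
    refine le_max_of_le_left (card_le_card fun l hl => mem_filter.2 ⟨mem_univ _, ?_⟩)
    have hl := (mem_filter.1 hl).2
    rcases le_total l l' with hll | hll
    · exact le_antisymm (hl'a ▸ ha hll) (hl ▸ min_le_left _ _)
    · rcases min_choice (a l) (g l) with h | h
      · rwa [h] at hl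
      · rw [h] at hl
        exact absurd hl (hjg.trans_le (hg hll)).ne'
  · push Not at hex
    exact le_max_of_le_right (card_le_card fun l hl =>
      mem_filter.2 ⟨mem_univ _, hex l (mem_filter.1 hl).2⟩)

def infPrefix {t u : ℕ} (a : Fin u → α) (g : Fin t → α) : Fin u → α :=
  fun i => if h : (i : ℕ) < t then min (a i) (g ⟨i, h⟩) else a i

end SortedTuples

section MonomialIdeals

variable {σ R : Type*} [CommSemiring R]

lemma span_monomial_mul_span_monomial (A B : Set (σ →₀ ℕ)) :
    Ideal.span ((monomial · (1 : R)) '' A) * Ideal.span ((monomial · (1 : R)) '' B) =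
      Ideal.span ((monomial · (1 : R)) '' (A + B)) := by
  rw [Ideal.span_mul_span', ← Set.image2_mul, Set.image2_image_left, Set.image2_image_right,
    ← Set.image2_add, Set.image_image2]
  simp only [monomial_mul, one_mul]

lemma list_prod_span_monomial (As : List (Set (σ →₀ ℕ))) :
    (As.map fun A => Ideal.span ((monomial · (1 : R)) '' A)).prod =
      Ideal.span ((monomial · (1 : R)) '' As.sum) := by
  induction As with
  | nil => simp
  | cons A As ih => rw [List.map_cons, List.prod_cons, ih, span_monomial_mul_span_monomial,
      List.sum_cons]

end MonomialIdeals

namespace DiagonalPacking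

variable {m n : ℕ}

noncomputable def cells {t : ℕ} (c : Fin t → Fin n) : (Fin m × Fin n) →₀ ℕ :=
  Finsupp.equivFunOnFinite.symm fun z =>
    if h : (z.1 : ℕ) < t then if c ⟨z.1, h⟩ = z.2 then 1 else 0 else 0

section Cells

variable {t u : ℕ} {ν : (Fin m × Fin n) →₀ ℕ}

lemma cells_apply_castLE (htm : t ≤ m) (c : Fin t → Fin n) (i : Fin t) (j : Fin n) :
    cells c (Fin.castLE htm i, j) = if c i = j then 1 else 0 := by
  simp [cells]

lemma cells_apply_of_le (c : Fin t → Fin n) {r : Fin m} (hr : t ≤ r) (j : Fin n) :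
    cells c (r, j) = 0 := by
  simp [cells, hr.not_gt]

lemma cells_le_iff (htm : t ≤ m) {c : Fin t → Fin n} :
    cells c ≤ ν ↔ ∀ i, 1 ≤ ν (Fin.castLE htm i, c i) := by
  refine ⟨fun h i => ?_, fun h => Finsupp.le_def.2 ?_⟩
  · simpa [cells_apply_castLE] using Finsupp.le_def.1 h (Fin.castLE htm i, c i)
  rintro ⟨r, j⟩
  by_cases hr : (r : ℕ) < t
  · rw [show r = Fin.castLE htm ⟨r, hr⟩ from rfl, cells_apply_castLE]
    split_ifs with hj
    · exact hj ▸ h _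
    · exact Nat.zero_le _
  · rw [cells_apply_of_le _ (not_lt.1 hr)]
    exact Nat.zero_le _

variable {ι : Type*} [Fintype ι]

lemma sum_cells_apply_castLE (hum : u ≤ m) (F : ι → Fin u → Fin n) (i : Fin u) (j : Fin n) :
    (∑ l, cells (F l)) (Fin.castLE hum i, j) = #{l | F l i = j} := by
  simp only [Finsupp.finsetSum_apply, cells_apply_castLE, card_filter]

lemma sum_cells_le_iff (hum : u ≤ m) {F : ι → Fin u → Fin n} :
    ∑ l, cells (F l) ≤ ν ↔ ∀ i j, #{l | F l i = j} ≤ ν (Fin.castLE hum i, j) := by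
  refine ⟨fun h i j => ?_, fun h => Finsupp.le_def.2 ?_⟩
  · exact sum_cells_apply_castLE hum F i j ▸ Finsupp.le_def.1 h _
  rintro ⟨r, j⟩
  by_cases hr : (r : ℕ) < u
  · rw [show r = Fin.castLE hum ⟨r, hr⟩ from rfl, sum_cells_apply_castLE]
    exact h _ j
  · rw [Finsupp.finsetSum_apply, sum_eq_zero fun l _ => cells_apply_of_le _ (not_lt.1 hr) j]
    exact Nat.zero_le _

end Cells

def IsChainIn (ν : (Fin m × Fin n) →₀ ℕ) {t : ℕ} (φ : Fin t → Fin n) : Prop :=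
  StrictMono φ ∧ cells φ ≤ ν

section Chains

variable {t : ℕ} {ν : (Fin m × Fin n) →₀ ℕ}

lemma IsChainIn.sup (htm : t ≤ m) {φ ψ : Fin t → Fin n} (hφ : IsChainIn ν φ)
    (hψ : IsChainIn ν ψ) : IsChainIn ν (φ ⊔ ψ) := by
  refine ⟨fun i i' h => sup_lt_iff.2
    ⟨(hφ.1 h).trans_le le_sup_left, (hψ.1 h).trans_le le_sup_right⟩, (cells_le_iff htm).2 ?_⟩
  intro i
  rcases le_total (φ i) (ψ i) with h | h
  · simpa [sup_of_le_right h] using (cells_le_iff htm).1 hψ.2 i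
  · simpa [sup_of_le_left h] using (cells_le_iff htm).1 hφ.2 i

lemma exists_isGreatest_chain (htm : t ≤ m) {φ : Fin t → Fin n} (hφ : IsChainIn ν φ) :
    ∃ D, IsGreatest {ψ : Fin t → Fin n | IsChainIn ν ψ} D := by
  classical
  let s : Finset (Fin t → Fin n) := {ψ | IsChainIn ν ψ}
  have hs : s.Nonempty := ⟨φ, mem_filter.2 ⟨mem_univ _, hφ⟩⟩
  refine ⟨s.sup' hs id, sup'_mem {ψ | IsChainIn ν ψ} (fun _ h _ h' => h.sup htm h') _ hs _
    fun ψ hψ => (mem_filter.1 hψ).2, fun ψ hψ => le_sup' id (mem_filter.2 ⟨mem_univ _, hψ⟩)⟩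

/-- Otherwise `j` could replace `D i` in `D`. -/
lemma le_of_isGreatest_of_lt (htm : t ≤ m) {D : Fin t → Fin n}
    (hD : IsGreatest {ψ | IsChainIn ν ψ} D) {i i' : Fin t} (hi' : (i' : ℕ) = i + 1) {j : Fin n}
    (hj : D i < j) (hν : 1 ≤ ν (Fin.castLE htm i, j)) : D i' ≤ j := by
  by_contra! hji
  have hchain : IsChainIn ν (Function.update D i j) := by
    refine ⟨fun k k' hkk' => ?_, (cells_le_iff htm).2 fun k => ?_⟩
    · rcases eq_or_ne k i with rfl | hk <;> rcases eq_or_ne k' k with rfl | hk'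
      · exact absurd hkk' (lt_irrefl _)
      · rw [Function.update_self, Function.update_of_ne hk']
        exact hji.trans_le (hD.1.1.monotone (Fin.le_def.2 (by rw [Fin.lt_def] at hkk'; omega)))
      · exact absurd hkk' (lt_irrefl _)
      · rcases eq_or_ne k' i with rfl | hk''
        · rw [Function.update_self, Function.update_of_ne hk]
          exact (hD.1.1 hkk').trans hj
        · rw [Function.update_of_ne hk, Function.update_of_ne hk'']
          exact hD.1.1 hkk'
    · rcases eq_or_ne k i with rfl | hk
      · simpa using hν
      · simpa [hk] using (cells_le_iff htm).1 hD.1.2 k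
  exact (hD.2 hchain i).not_gt (by simpa using hj)

end Chains

def HasPacking (ν : (Fin m × Fin n) →₀ ℕ) (u b e : ℕ) : Prop :=
  ∃ F : Fin e → Fin u → Fin n, (∀ l, NEcols n u b (F l)) ∧ ∑ l, cells (F l) ≤ ν

structure IsSortedPacking (ν : (Fin m × Fin n) →₀ ℕ) (b : ℕ) {e u : ℕ}
    (F : Fin e → Fin u → Fin n) : Prop where
  neCols : ∀ l, NEcols n u b (F l)
  sum_le : ∑ l, cells (F l) ≤ ν
  sorted : ∀ i, Monotone fun l => F l i

section Packings

variable {ν ν' : (Fin m × Fin n) →₀ ℕ} {u b e : ℕ}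

lemma hasPacking_zero (ν : (Fin m × Fin n) →₀ ℕ) (u b : ℕ) : HasPacking ν u b 0 :=
  ⟨Fin.elim0, fun l => l.elim0, by simp⟩

lemma HasPacking.mono (h : HasPacking ν u b e) (hν : ν ≤ ν') : HasPacking ν' u b e :=
  let ⟨F, hF, hle⟩ := h
  ⟨F, hF, hle.trans hν⟩

lemma HasPacking.of_le (h : HasPacking ν u b e) {e' : ℕ} (he : e' ≤ e) :
    HasPacking ν u b e' := by
  obtain ⟨F, hF, hle⟩ := h
  refine ⟨fun l => F (Fin.castLE he l), fun l => hF _, le_trans ?_ hle⟩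
  calc ∑ l, cells (F (Fin.castLE he l)) = ∑ l ∈ univ.map (Fin.castLEEmb he), cells (F l) := by
        rw [sum_map]; rfl
    _ ≤ ∑ l, cells (F l) := sum_le_sum_of_subset (subset_univ _)

lemma isChainIn_of_sum_le {F : Fin e → Fin u → Fin n} (hF : ∑ l, cells (F l) ≤ ν) {l : Fin e}
    (hl : StrictMono (F l)) : IsChainIn ν (F l) :=
  ⟨hl, (single_le_sum (f := fun l => cells (F l)) (fun _ _ => zero_le) (mem_univ l)).trans hF⟩

/-- Sorting every row of a packing keeps each diagonal strictly increasing. -/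
theorem HasPacking.exists_sorted (hum : u ≤ m) (h : HasPacking ν u b e) :
    ∃ F : Fin e → Fin u → Fin n, IsSortedPacking ν b F := by
  obtain ⟨G, hG, hle⟩ := h
  let σ i := Tuple.sort fun l => G l i
  refine ⟨fun l i => G (σ i l) i, fun l => ⟨fun i i' hii' => ?_, fun i => (hG _).2 i⟩, ?_,
    fun i => Tuple.monotone_sort fun l => G l i⟩
  · exact Tuple.sort_lt_sort (fun k => (hG k).1 hii') l
  rw [sum_cells_le_iff hum] at hle ⊢
  intro i j
  refine le_of_eq_of_le ?_ (hle i j)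
  rw [card_filter, card_filter]
  exact Equiv.sum_comp (σ i) fun k => if G k i = j then 1 else 0

end Packings

lemma neCols_infPrefix {t u b : ℕ} {a : Fin u → Fin n} {g : Fin t → Fin n}
    (ha : NEcols n u b a) (hg : NEcols n t b g) : NEcols n u b (infPrefix a g) := by
  refine ⟨fun i i' hii' => ?_, fun i => ?_⟩
  · have hii'' : (i : ℕ) < i' := hii'
    simp only [infPrefix]
    split_ifs with h h' h'
    · exact lt_min ((min_le_left _ _).trans_lt (ha.1 hii'))
        ((min_le_right _ _).trans_lt (hg.1 (Fin.lt_def.2 hii'')))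
    · exact (min_le_left _ _).trans_lt (ha.1 hii')
    · omega
    · exact ha.1 hii'
  · simp only [infPrefix]
    split_ifs with h
    · rcases min_choice (a i) (g ⟨i, h⟩) with h' | h' <;> rw [h']
      exacts [ha.2 i, hg.2 _]
    · exact ha.2 i

section Greedy

variable {ν : (Fin m × Fin n) →₀ ℕ} {t u b e : ℕ} {D : Fin t → Fin n}

/-- Row `i` gives up the entry of the last diagonal that is `≤ D i`; by the gap property of `D`
these positions decrease with `i`. -/
theorem IsSortedPacking.sub_greatest (htm : t ≤ m) (hut : u ≤ t)
    (hD : IsGreatest {ψ | IsChainIn ν ψ} D) {F : Fin (e + 1) → Fin u → Fin n}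
    (hF : IsSortedPacking ν b F) : HasPacking (ν - cells D) u b e := by
  let d : Fin u → Fin n := fun i => D (Fin.castLE hut i)
  let q : Fin u → Fin (e + 1) := fun i => lastLE (fun l => F l i) (d i)
  have hq : Antitone q := Fin.antitone_of_val_succ_le fun i i' hi' =>
    lastLE_le_lastLE fun k hk => by
      by_contra! hlt
      have hν := (cells_le_iff (hut.trans htm)).1
        (isChainIn_of_sum_le hF.sum_le (hF.neCols k).1).2 i
      have hgap := le_of_isGreatest_of_lt htm hD (i := Fin.castLE hut i)
        (i' := Fin.castLE hut i') hi' hlt hν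
      exact hk.not_gt (hgap.trans_lt ((hF.neCols k).1 (Fin.lt_def.2 (by omega))))
  refine ⟨fun l i => F ((q i).succAbove l) i,
    fun l => ⟨fun i i' hii' => ?_, fun i => (hF.neCols _).2 i⟩, ?_⟩
  · calc F ((q i).succAbove l) i
        ≤ F ((q i').succAbove l) i :=
          hF.sorted i (Fin.succAbove_le_succAbove_of_le (hq hii'.le) l)
      _ < F ((q i').succAbove l) i' := (hF.neCols _).1 hii'
  rw [sum_cells_le_iff (hut.trans htm)]
  intro i j
  rw [Finsupp.tsub_apply, ← Fin.castLE_castLE hut htm, cells_apply_castLE]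
  exact card_succAbove_lastLE_le (hF.sorted i) (d i) j
    ((sum_cells_le_iff (hut.trans htm)).1 hF.sum_le i j)
    fun h => h ▸ (cells_le_iff htm).1 hD.1.2 _

/-- Every diagonal of `G` lies below `D`, so a minimum can sit on the cell `(i, D i)` only
through `G`, which avoids the cells of `D`. -/
theorem IsSortedPacking.merge (htm : t ≤ m) (hum : u ≤ m)
    (hD : IsGreatest {ψ | IsChainIn ν ψ} D) {A : Fin e → Fin u → Fin n}
    (hA : IsSortedPacking ν b A) {G : Fin e → Fin t → Fin n}
    (hG : IsSortedPacking (ν - cells D) b G) : HasPacking (ν - cells D) u b e := by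
  have hGD : ∀ l, G l ≤ D := fun l =>
    hD.2 (isChainIn_of_sum_le (hG.sum_le.trans tsub_le_self) (hG.neCols l).1)
  refine ⟨fun l => infPrefix (A l) (G l), fun l => neCols_infPrefix (hA.neCols l) (hG.neCols l),
    (sum_cells_le_iff hum).2 fun i j => ?_⟩
  have hAij := (sum_cells_le_iff hum).1 hA.sum_le i j
  by_cases hit : (i : ℕ) < t
  · let iT : Fin t := ⟨i, hit⟩
    have hGij := (sum_cells_le_iff htm).1 hG.sum_le iT j
    rw [show Fin.castLE hum i = Fin.castLE htm iT from rfl] at hAij ⊢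
    rw [Finsupp.tsub_apply, cells_apply_castLE] at hGij ⊢
    simp only [infPrefix, dif_pos hit]
    split_ifs at hGij ⊢ with hDj
    · refine (card_le_card fun l hl => mem_filter.2 ⟨mem_univ _, ?_⟩).trans hGij
      exact le_antisymm (hDj ▸ hGD l iT) ((mem_filter.1 hl).2 ▸ min_le_right _ _)
    · exact (card_min_eq_le (hA.sorted i) (hG.sorted iT) j).trans
        (max_le hAij (hGij.trans tsub_le_self))
  · simp only [infPrefix, dif_neg hit]
    rw [Finsupp.tsub_apply, cells_apply_of_le _ (by simpa using not_lt.1 hit), tsub_zero]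
    exact hAij

theorem HasPacking.sub_greatest_of_le (htm : t ≤ m) (hut : u ≤ t)
    (hD : IsGreatest {ψ | IsChainIn ν ψ} D) (h : HasPacking ν u b (e + 1)) :
    HasPacking (ν - cells D) u b e :=
  let ⟨_, hF⟩ := h.exists_sorted (hut.trans htm)
  hF.sub_greatest htm hut hD

theorem HasPacking.sub_greatest_of_ge (htu : t ≤ u) (hum : u ≤ m)
    (hD : IsGreatest {ψ | IsChainIn ν ψ} D) (hA : HasPacking ν u b e)
    (hG : HasPacking ν t b (e + 1)) : HasPacking (ν - cells D) u b e := by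
  have htm := htu.trans hum
  obtain ⟨A, hA⟩ := hA.exists_sorted hum
  obtain ⟨G, hG⟩ := (hG.sub_greatest_of_le htm le_rfl hD).exists_sorted htm
  exact hA.merge htm hum hD hG

lemma HasPacking.exists_chain (h : HasPacking ν u b (e + 1)) :
    ∃ c : Fin u → Fin n, NEcols n u b c ∧ IsChainIn ν c :=
  let ⟨F, hF, hle⟩ := h
  ⟨F 0, hF 0, isChainIn_of_sum_le hle (hF 0).1⟩

lemma eCount_cons (p : ℕ × ℕ) (L : List (ℕ × ℕ)) (u b : ℕ) :
    eCount (p :: L) u b = eCount L u b + if b ≤ p.2 ∧ u ≤ p.1 then 1 else 0 := by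
  simp [eCount, List.countP_cons]

lemma eCount_append_singleton (L : List (ℕ × ℕ)) (p : ℕ × ℕ) (u b : ℕ) :
    eCount (L ++ [p]) u b = eCount L u b + if b ≤ p.2 ∧ u ≤ p.1 then 1 else 0 := by
  simp [eCount, List.countP_append]

lemma eCount_anti_left (L : List (ℕ × ℕ)) {u u' : ℕ} (h : u ≤ u') (b : ℕ) :
    eCount L u' b ≤ eCount L u b :=
  List.countP_mono_left fun q _ hq => by
    simp only [decide_eq_true_eq] at hq ⊢
    omega

lemma eCount_eq_zero {L : List (ℕ × ℕ)} {b : ℕ} (h : ∀ q ∈ L, q.2 < b) (u : ℕ) :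
    eCount L u b = 0 :=
  List.countP_eq_zero.2 fun q hq => by
    simp only [decide_eq_true_eq, not_and]
    exact fun hb => absurd (h q hq) (not_lt.2 hb)

theorem hasPacking_sub_greatest {L : List (ℕ × ℕ)} {p : ℕ × ℕ} (hp : ValidPair m n p)
    (hL : ∀ q ∈ L, q.2 ≤ p.2) {D : Fin p.1 → Fin n} (hD : IsGreatest {ψ | IsChainIn ν ψ} D)
    (H : ∀ u b, ValidPair m n (u, b) → HasPacking ν u b (eCount (L ++ [p]) u b))
    (hub : ValidPair m n (u, b)) : HasPacking (ν - cells D) u b (eCount L u b) := by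
  have hA := H u b hub
  obtain ⟨hp1, -, hpm, hpn⟩ := hp
  obtain ⟨-, hb1, hum : u ≤ m, -⟩ := hub
  by_cases hb : b ≤ p.2
  swap
  · rw [eCount_eq_zero fun q hq => (hL q hq).trans_lt (not_le.1 hb)]
    exact hasPacking_zero _ _ _
  rcases le_or_gt u p.1 with hu | hu
  · rw [eCount_append_singleton, if_pos ⟨hb, hu⟩] at hA
    exact hA.sub_greatest_of_le hpm hu hD
  · rw [eCount_append_singleton, if_neg fun h => h.2.not_gt hu, add_zero] at hA
    have hG := H p.1 b ⟨hp1, hb1, hpm, by omega⟩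
    rw [eCount_append_singleton, if_pos ⟨hb, le_rfl⟩] at hG
    exact hA.sub_greatest_of_ge hu.le hum hD (hG.of_le (Nat.add_le_add_right
      (eCount_anti_left L hu.le b) 1))

end Greedy

section Patterns

variable {ν : (Fin m × Fin n) →₀ ℕ} {u b e : ℕ}

def diagExps (u b : ℕ) : Set ((Fin m × Fin n) →₀ ℕ) :=
  cells '' {c : Fin u → Fin n | NEcols n u b c}

def HasPatternPacking (ν : (Fin m × Fin n) →₀ ℕ) (S : List (ℕ × ℕ)) : Prop :=
  ∃ d ∈ (S.map fun p => diagExps p.1 p.2).sum, d ≤ ν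

lemma HasPatternPacking.append_singleton {L : List (ℕ × ℕ)} {p : ℕ × ℕ} {c : Fin p.1 → Fin n}
    (hc : NEcols n p.1 p.2 c) (hcν : cells c ≤ ν) (h : HasPatternPacking (ν - cells c) L) :
    HasPatternPacking ν (L ++ [p]) := by
  obtain ⟨d, hd, hdν⟩ := h
  refine ⟨d + cells c, ?_, add_le_of_le_tsub_right_of_le hcν hdν⟩
  rw [List.map_append, List.sum_append, List.map_singleton, List.sum_singleton]
  exact Set.add_mem_add hd ⟨c, hc, rfl⟩

/-- The last type of the pattern is packed by the greatest chain of its length. -/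
theorem hasPatternPacking_of_forall_hasPacking {S : List (ℕ × ℕ)}
    (hS : ∀ p ∈ S, ValidPair m n p) (hord : S.Pairwise fun p q => p.2 ≤ q.2)
    (H : ∀ u b, ValidPair m n (u, b) → HasPacking ν u b (eCount S u b)) :
    HasPatternPacking ν S := by
  induction S using List.reverseRecOn generalizing ν with
  | nil => exact ⟨0, Set.zero_mem_zero, zero_le⟩
  | append_singleton L p ih =>
    have hp := hS p (by simp)
    have hp1 : HasPacking ν p.1 p.2 1 := (H p.1 p.2 hp).of_le <| by
      rw [eCount_append_singleton, if_pos ⟨le_rfl, le_rfl⟩]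
      omega
    obtain ⟨c, hc, hcν⟩ := hp1.exists_chain
    obtain ⟨D, hD⟩ := exists_isGreatest_chain hp.2.2.1 hcν
    have hDc : NEcols n p.1 p.2 D :=
      ⟨hD.1.1, fun j => (hc.2 j).trans (Nat.add_le_add_right (hD.2 hcν j) 1)⟩
    obtain ⟨hordL, -, hordp⟩ := List.pairwise_append.1 hord
    refine HasPatternPacking.append_singleton hDc hD.1.2
      (ih (fun q hq => hS q (by simp [hq])) hordL fun u b hub => ?_)
    exact hasPacking_sub_greatest hp (fun q hq => hordp q hq p (by simp)) hD H hub

lemma cells_comp_castLE_le {t u : ℕ} (h : u ≤ t) (c : Fin t → Fin n) :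
    cells (m := m) (fun i => c (Fin.castLE h i)) ≤ cells c := by
  refine Finsupp.le_def.2 fun ⟨r, j⟩ => ?_
  simp only [cells, Finsupp.equivFunOnFinite_symm_apply_apply, Fin.castLE_mk]
  split_ifs <;> omega

lemma hasPacking_of_mem_sum :
    ∀ {S : List (ℕ × ℕ)} {d : (Fin m × Fin n) →₀ ℕ},
      d ∈ (S.map fun p => diagExps p.1 p.2).sum → ∀ u b, HasPacking d u b (eCount S u b)
  | [], _, _, u, b => hasPacking_zero _ u b
  | p :: L, _, hd, u, b => by
    rw [List.map_cons, List.sum_cons] at hd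
    obtain ⟨_, ⟨c, hc, rfl⟩, d', hd', rfl⟩ := Set.mem_add.1 hd
    obtain ⟨F, hF, hle⟩ := hasPacking_of_mem_sum hd' u b
    rw [eCount_cons]
    split_ifs with h
    · refine ⟨Fin.cons (fun i => c (Fin.castLE h.2 i)) F,
        Fin.cases ⟨hc.1.comp (Fin.strictMono_castLE h.2), fun i => h.1.trans (hc.2 _)⟩ hF, ?_⟩
      rw [Fin.sum_univ_succ]
      exact add_le_add (cells_comp_castLE_le h.2 c) hle
    · exact ⟨F, hF, hle.trans le_add_self⟩

lemma HasPatternPacking.hasPacking {S : List (ℕ × ℕ)} (h : HasPatternPacking ν S) (u b : ℕ) :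
    HasPacking ν u b (eCount S u b) :=
  let ⟨_, hd, hdν⟩ := h
  (hasPacking_of_mem_sum hd u b).mono hdν

lemma hasPatternPacking_replicate_iff :
    HasPatternPacking ν (List.replicate e (u, b)) ↔ HasPacking ν u b e := by
  simp only [HasPatternPacking, List.map_replicate, List.sum_replicate, Set.mem_nsmul]
  constructor
  · rintro ⟨_, ⟨f, rfl⟩, hle⟩
    choose F hF hFf using fun l => (f l).2
    refine ⟨F, hF, ?_⟩
    rwa [List.sum_ofFn, ← funext hFf] at hle
  · rintro ⟨F, hF, hle⟩
    exact ⟨_, ⟨fun l => ⟨cells (F l), F l, hF l, rfl⟩, rfl⟩, by rwa [List.sum_ofFn]⟩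

end Patterns

section Monomials

variable (K : Type*) [Field K] {t : ℕ}

lemma cells_eq_sum_single (htm : t ≤ m) (c : Fin t → Fin n) :
    cells c = ∑ i, Finsupp.single (Fin.castLE htm i, c i) 1 := by
  ext ⟨r, j⟩
  by_cases hr : (r : ℕ) < t
  · rw [show r = Fin.castLE htm ⟨r, hr⟩ from rfl, cells_apply_castLE, Finsupp.finsetSum_apply,
      sum_eq_single ⟨r, hr⟩]
    · simp [Finsupp.single_apply, eq_comm]
    · intro i _ hi
      simp only [Finsupp.single_apply, Prod.ext_iff, Fin.ext_iff, Fin.val_castLE]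
      exact if_neg fun h => hi (Fin.ext h.1)
    · simp
  · rw [cells_apply_of_le _ (not_lt.1 hr), Finsupp.finsetSum_apply]
    refine (sum_eq_zero fun i _ => Finsupp.single_eq_of_ne ?_).symm
    exact fun h => hr (congrArg Fin.val (congrArg Prod.fst h) ▸ i.2)

lemma diagP_eq_monomial (htm : t ≤ m) (c : Fin t → Fin n) :
    diagP K m n c = monomial (cells c) 1 := by
  rw [diagP, cells_eq_sum_single htm, monomial_sum_one]
  exact prod_congr rfl fun i _ => by rw [dif_pos (i.2.trans_le htm)]; rfl

lemma JIdeal_eq_span_monomial (htm : t ≤ m) (a : ℕ) :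
    JIdeal K m n t a = Ideal.span ((monomial · (1 : K)) '' diagExps t a) := by
  rw [JIdeal, diagExps, Set.image_image]
  congr 1
  ext f
  simp [diagP_eq_monomial K htm, eq_comm]

theorem mem_prod_JIdeal_iff {S : List (ℕ × ℕ)} (hS : ∀ p ∈ S, p.1 ≤ m)
    {f : MvPolynomial (Fin m × Fin n) K} :
    f ∈ (S.map fun p => JIdeal K m n p.1 p.2).prod ↔ ∀ ξ ∈ f.support, HasPatternPacking ξ S := by
  have hprod :=
    list_prod_span_monomial (R := K) (S.map fun p => diagExps (m := m) (n := n) p.1 p.2)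
  simp only [List.map_map, Function.comp_def] at hprod
  rw [List.map_congr_left fun p hp => JIdeal_eq_span_monomial K (hS p hp) p.2, hprod,
    mem_ideal_span_monomial_image]
  rfl

theorem mem_JIdeal_pow_iff {u b e : ℕ} (hum : u ≤ m) {f : MvPolynomial (Fin m × Fin n) K} :
    f ∈ JIdeal K m n u b ^ e ↔ ∀ ξ ∈ f.support, HasPacking ξ u b e := by
  rw [← List.prod_replicate,
    ← List.map_replicate (f := fun p : ℕ × ℕ => JIdeal K m n p.1 p.2) (a := (u, b)),
    mem_prod_JIdeal_iff K fun p hp => List.eq_of_mem_replicate hp ▸ hum]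
  simp only [hasPatternPacking_replicate_iff]

end Monomials

end DiagonalPacking

open DiagonalPacking

theorem JS_eq_iInf_pow_general (K : Type*) [Field K] (m n : ℕ)
    (S : List (ℕ × ℕ)) (hS : IsNEPattern m n S) :
    (S.map fun p => JIdeal K m n p.1 p.2).prod =
      ⨅ (u : ℕ) (b : ℕ) (_ : 1 ≤ u) (_ : 1 ≤ b) (_ : u ≤ m) (_ : u + b ≤ n + 1),
        JIdeal K m n u b ^ eCount S u b := by
  ext f
  simp only [Ideal.mem_iInf, mem_prod_JIdeal_iff K fun p hp => (hS.1 p hp).2.2.1]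
  constructor
  · intro h u b _ _ hum _
    exact (mem_JIdeal_pow_iff K hum).2 fun ξ hξ => (h ξ hξ).hasPacking u b
  · intro h ξ hξ
    refine hasPatternPacking_of_forall_hasPacking hS.1 (hS.2.imp And.left) ?_
    rintro u b ⟨h1, h2, hum, h4⟩
    exact (mem_JIdeal_pow_iff K hum).1 (h u b h1 h2 hum h4) ξ hξ

/-- For a NE-pattern `S`, the product of the monomial ideals
`J_{t_1}(a_1)⋯J_{t_w}(a_w)` equals the intersection `⋂_{(u,b)} J_u(b)^{e_{ub}(S)}`
over all pairs `(u,b)` of positive integers with `u ≤ m` and `u + b ≤ n + 1`. -/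
theorem JS_eq_iInf_pow (K : Type*) [Field K] (m n : ℕ) (hm : 1 ≤ m) (hmn : m ≤ n)
    (S : List (ℕ × ℕ)) (hS : IsNEPattern m n S) :
    (S.map fun p => JIdeal K m n p.1 p.2).prod =
      ⨅ (u : ℕ) (b : ℕ) (_ : 1 ≤ u) (_ : 1 ≤ b) (_ : u ≤ m) (_ : u + b ≤ n + 1),
        JIdeal K m n u b ^ eCount S u b :=
  JS_eq_iInf_pow_general K m n S hS
end

section
/- Let k ∈ ℕ and let t, a, u, b be positive integers with b ≤ a, u > t, u ≤ m, t + a ≤ n + 1 and u + b ≤ n + 1. Let M be a monomial lying in J_u(b)^k ∩ J_t(b)^{k+1} ∩ J_t(a), and let F be the lexicographically smallest diagonal of type (t,a) dividing M. Then M/F ∈ J_u(b)^k. -/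
open MvPolynomial

/-- `c` gives the lexicographically smallest diagonal of type `(t,a)` dividing the
monomial `M`: the diagonal is of type `(t,a)`, divides `M`, and its column sequence is
lexicographically greatest among all diagonals of type `(t,a)` dividing `M`. -/
def IsSmallestDiagDividing (K : Type*) [Field K] (m n : ℕ) (t a : ℕ)
    (M : MvPolynomial (Fin m × Fin n) K) (c : Fin t → Fin n) : Prop :=
  NEcols n t a c ∧ diagP K m n c ∣ M ∧
    ∀ c' : Fin t → Fin n, NEcols n t a c' → diagP K m n c' ∣ M →
      c' = c ∨ ∃ j : Fin t, (∀ i < j, c' i = c i) ∧ c' j < c j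

open Finset
open scoped Pointwise

/-!
Write `M = X^d`; a monomial lies in `J_r(b)^k` exactly when `d` dominates the exponent sum of
`k` diagonals of type `(r,b)`. Take such families `D_1, …, D_k` of type `(u,b)` and
`E_0, …, E_k` of type `(t,b)` for `M`. Since `F` is lexicographically smallest, every `E_i` lies
entrywise below `F`: otherwise the entrywise maximum of `E_i` and `F` would be a
lexicographically smaller diagonal dividing `M`. Sorting each row of a family keeps it a family
of diagonals. After sorting, replace the entry of `D_l` in each row `j < t` by
`min (D_l j) (E_l j)`, for `l < k`. The rows stay strictly increasing, and in each row the new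
entries together with the entry of `F` still fit into `M`: the multiplicities of the minima are
bounded by those of the two sorted rows, and `F`'s entry is paid for by the discarded entry
`E_k j`, the largest of its row.
-/

section Counting

variable {ι α : Type*} [Fintype ι] [LinearOrder α]

theorem card_filter_comp_perm (σ : Equiv.Perm ι) (p : ι → Prop) [DecidablePred p] :
    #{i | p (σ i)} = #{i | p i} :=
  card_equiv σ (by simp)

theorem card_filter_le_eq_add (g : ι → α) (v : α) :
    #{l | g l ≤ v} = #{l | g l = v} + #{l | g l < v} := by
  classical
  rw [← card_union_of_disjoint (disjoint_filter.2 fun _ _ h => h.not_lt), ← filter_or]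
  simp_rw [le_iff_eq_or_lt]

theorem card_filter_min_mem_eq_max [LinearOrder ι] {s e : ι → α} (hs : Monotone s)
    (he : Monotone e) {P : α → Prop} [DecidablePred P] (hP : IsLowerSet {x | P x}) :
    #{l | P (min (s l) (e l))} = max #{l | P (s l)} #{l | P (e l)} := by
  classical
  have hmin : ∀ x y, P (min x y) ↔ P x ∨ P y := fun x y => by
    refine ⟨fun h => ?_, fun h => h.elim (hP (min_le_left x y)) (hP (min_le_right x y))⟩
    rcases min_choice x y with hxy | hxy <;> rw [hxy] at h <;> simp [h]
  simp_rw [hmin, filter_or]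
  rcases (hP.preimage hs).total (hP.preimage he) with h | h
  · have h' : filter (fun l => P (s l)) univ ⊆ filter (fun l => P (e l)) univ :=
      fun l => by simpa using @h l
    rw [union_eq_right.2 h', max_eq_right (card_le_card h')]
  · have h' : filter (fun l => P (e l)) univ ⊆ filter (fun l => P (s l)) univ :=
      fun l => by simpa using @h l
    rw [union_eq_left.2 h', max_eq_left (card_le_card h')]

theorem card_filter_min_eq_le_max [LinearOrder ι] {s e : ι → α} (hs : Monotone s)
    (he : Monotone e) (v : α) :
    #{l | min (s l) (e l) = v} ≤ max #{l | s l = v} #{l | e l = v} := by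
  have hle := card_filter_min_mem_eq_max hs he (isLowerSet_Iic v)
  have hlt := card_filter_min_mem_eq_max hs he (isLowerSet_Iio v)
  have := card_filter_le_eq_add (fun l => min (s l) (e l)) v
  have := card_filter_le_eq_add s v
  have := card_filter_le_eq_add e v
  omega

end Counting

theorem card_filter_castSucc_add {α : Type*} [DecidableEq α] {k : ℕ} (e : Fin (k + 1) → α)
    (v : α) :
    #{l | e l = v} = #{l : Fin k | e l.castSucc = v} + if e (Fin.last k) = v then 1 else 0 := by
  simp only [card_filter, Fin.sum_univ_castSucc]

theorem comp_sort_lt_comp_sort {α : Type*} [LinearOrder α] {k : ℕ} {a b : Fin k → α}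
    (hab : ∀ i, a i < b i) (l : Fin k) :
    a (Tuple.sort a l) < b (Tuple.sort b l) := by
  by_contra! h
  set x := a (Tuple.sort a l)
  have hlt : (l : ℕ) < #{i | a (Tuple.sort a i) < x} :=
    calc (l : ℕ) < #{i | b (Tuple.sort b i) ≤ x} :=
          (Tuple.lt_card_le_iff_apply_le_of_monotone (Tuple.monotone_sort b)).2 h
      _ = #{i | b i ≤ x} := card_filter_comp_perm (Tuple.sort b) (b · ≤ x)
      _ ≤ #{i | a i < x} :=
          card_le_card fun i => by simpa using fun hi => (hab i).trans_le hi
      _ = #{i | a (Tuple.sort a i) < x} := (card_filter_comp_perm (Tuple.sort a) (a · < x)).symm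
  exact lt_irrefl x ((Tuple.lt_card_lt_iff_apply_lt_of_monotone (Tuple.monotone_sort a)).1 hlt)

theorem card_filter_min_castSucc_add_le {α : Type*} [LinearOrder α] {k : ℕ}
    {s : Fin k → α} {e : Fin (k + 1) → α} (hs : Monotone s) (he : Monotone e) {f : α}
    (hef : ∀ l, e l ≤ f) {N : α → ℕ}
    (hsN : ∀ v, #{l | s l = v} ≤ N v) (heN : ∀ v, #{l | e l = v} ≤ N v) (hf : 1 ≤ N f)
    (v : α) :
    #{l | min (s l) (e l.castSucc) = v} + (if f = v then 1 else 0) ≤ N v := by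
  have hmax := card_filter_min_eq_le_max hs (he.comp Fin.strictMono_castSucc.monotone) v
  simp only [Function.comp_apply] at hmax
  have hsplit := card_filter_castSucc_add e v
  have := hsN v
  have := heN v
  by_cases hfv : f = v
  · subst hfv
    rw [if_pos rfl]
    have hmin : #{l | min (s l) (e l.castSucc) = f} ≤ #{l : Fin k | e l.castSucc = f} :=
      card_le_card fun l => by
        simpa using fun h => le_antisymm (hef _) (h ▸ min_le_right _ _)
    by_cases hlast : e (Fin.last k) = f
    · rw [if_pos hlast] at hsplit
      omega
    · -- a truncated tuple bounded by `f` attains `f` only if its last entry does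
      have hnone : #{l : Fin k | e l.castSucc = f} = 0 :=
        card_eq_zero.2 (filter_eq_empty_iff.2 fun l _ hl =>
          hlast (le_antisymm (hef _) (hl ▸ he (Fin.le_last _))))
      omega
  · rw [if_neg hfv]
    split_ifs at hsplit <;> omega

section RowSort

variable {α : Type*} [LinearOrder α] {k r : ℕ}

def rowSort (D : Fin k → Fin r → α) : Fin k → Fin r → α :=
  fun l j => D (Tuple.sort (fun i => D i j) l) j

theorem monotone_rowSort (D : Fin k → Fin r → α) (j : Fin r) :
    Monotone fun l => rowSort D l j :=
  Tuple.monotone_sort fun i => D i j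

theorem card_rowSort_eq (D : Fin k → Fin r → α) (j : Fin r) (v : α) :
    #{l | rowSort D l j = v} = #{i | D i j = v} :=
  card_filter_comp_perm _ (D · j = v)

theorem strictMono_rowSort {D : Fin k → Fin r → α} (hD : ∀ i, StrictMono (D i)) (l : Fin k) :
    StrictMono (rowSort D l) :=
  fun _ _ hj => comp_sort_lt_comp_sort (fun i => hD i hj) l

end RowSort

def minOnPrefix {α : Type*} [LinearOrder α] {t u : ℕ} (f : Fin u → α) (g : Fin t → α) :
    Fin u → α :=
  fun j => if h : (j : ℕ) < t then min (f j) (g ⟨j, h⟩) else f j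

theorem StrictMono.minOnPrefix {α : Type*} [LinearOrder α] {t u : ℕ} {f : Fin u → α}
    {g : Fin t → α} (hf : StrictMono f) (hg : StrictMono g) : StrictMono (minOnPrefix f g) := by
  intro j j' hjj'
  unfold _root_.minOnPrefix
  split_ifs with h h' h'
  · exact min_lt_min (hf hjj') (hg hjj')
  · exact (min_le_left _ _).trans_lt (hf hjj')
  · exact (h ((Fin.lt_def.1 hjj').trans h')).elim
  · exact hf hjj'

theorem MvPolynomial.monomial_mem_span_image_pow_iff {σ R : Type*} [CommSemiring R]
    [Nontrivial R] {T : Set (σ →₀ ℕ)} {k : ℕ} {d : σ →₀ ℕ} :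
    monomial d (1 : R) ∈ Ideal.span ((monomial · 1) '' T) ^ k ↔
      ∃ f : Fin k → σ →₀ ℕ, (∀ i, f i ∈ T) ∧ ∑ i, f i ≤ d := by
  classical
  have hpow : ((monomial · (1 : R)) '' T) ^ k =
      (monomial · 1) '' {e | ∃ f : Fin k → _, (∀ i, f i ∈ T) ∧ ∑ i, f i = e} := by
    ext x
    simp only [Set.mem_pow_iff_prod, Set.mem_image, Set.mem_ofPred_eq]
    constructor
    · rintro ⟨g, hg, rfl⟩
      choose f hf hfg using hg
      exact ⟨_, ⟨f, hf, rfl⟩, by simp only [monomial_sum_one, hfg]⟩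
    · rintro ⟨_, ⟨f, hf, rfl⟩, rfl⟩
      exact ⟨_, fun i => ⟨f i, hf i, rfl⟩, (monomial_sum_one _ _).symm⟩
  rw [Ideal.span, Submodule.span_pow, hpow, ← Ideal.span, mem_ideal_span_monomial_image,
    support_monomial, if_neg one_ne_zero]
  simp

section Diagonals

variable {m n r : ℕ}

noncomputable def diagExp (hrm : r ≤ m) (c : Fin r → Fin n) : Fin m × Fin n →₀ ℕ :=
  ∑ j, Finsupp.single (Fin.castLE hrm j, c j) 1

theorem diagExp_apply_castLE (hrm : r ≤ m) (c : Fin r → Fin n) (j : Fin r) (v : Fin n) :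
    diagExp hrm c (Fin.castLE hrm j, v) = if c j = v then 1 else 0 := by
  rw [diagExp, Finsupp.finsetSum_apply, Finset.sum_eq_single j]
  · simp [Finsupp.single_apply]
  · intro j' _ hj'
    simp [Prod.ext_iff, hj']
  · simp

theorem diagExp_apply_of_le (hrm : r ≤ m) (c : Fin r → Fin n) {p : Fin m × Fin n}
    (hp : r ≤ (p.1 : ℕ)) : diagExp hrm c p = 0 := by
  rw [diagExp, Finsupp.finsetSum_apply]
  refine Finset.sum_eq_zero fun j _ => ?_
  rw [Finsupp.single_apply, if_neg]
  rintro rfl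
  exact (j.2.trans_le hp).false

theorem le_iff_forall_castLE_le (hrm : r ≤ m) {e d : Fin m × Fin n →₀ ℕ}
    (he : ∀ p : Fin m × Fin n, r ≤ (p.1 : ℕ) → e p = 0) :
    e ≤ d ↔ ∀ j v, e (Fin.castLE hrm j, v) ≤ d (Fin.castLE hrm j, v) := by
  refine ⟨fun h j v => h _, fun h ⟨i, v⟩ => ?_⟩
  by_cases hi : (i : ℕ) < r
  · exact h ⟨i, hi⟩ v
  · simp [he (i, v) (not_lt.1 hi)]

theorem diagExp_le_iff (hrm : r ≤ m) (c : Fin r → Fin n) (d : Fin m × Fin n →₀ ℕ) :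
    diagExp hrm c ≤ d ↔ ∀ j, 1 ≤ d (Fin.castLE hrm j, c j) := by
  rw [le_iff_forall_castLE_le hrm fun _ => diagExp_apply_of_le hrm c]
  refine ⟨fun h j => by simpa [diagExp_apply_castLE] using h j (c j), fun h j v => ?_⟩
  rw [diagExp_apply_castLE]
  split_ifs with hv
  · exact hv ▸ h j
  · exact Nat.zero_le _

theorem sum_diagExp_apply_castLE {k : ℕ} (hrm : r ≤ m) (D : Fin k → Fin r → Fin n)
    (j : Fin r) (v : Fin n) :
    (∑ i, diagExp hrm (D i)) (Fin.castLE hrm j, v) = #{i | D i j = v} := by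
  rw [Finsupp.finsetSum_apply, card_filter]
  simp only [diagExp_apply_castLE]

theorem sum_diagExp_le_iff {k : ℕ} (hrm : r ≤ m) (D : Fin k → Fin r → Fin n)
    (d : Fin m × Fin n →₀ ℕ) :
    ∑ i, diagExp hrm (D i) ≤ d ↔ ∀ j v, #{i | D i j = v} ≤ d (Fin.castLE hrm j, v) := by
  rw [le_iff_forall_castLE_le hrm fun p hp => by
    simp [Finsupp.finsetSum_apply, diagExp_apply_of_le hrm _ hp]]
  simp only [sum_diagExp_apply_castLE]

theorem diagP_eq_monomial (K : Type*) [Field K] (hrm : r ≤ m) (c : Fin r → Fin n) :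
    diagP K m n c = monomial (diagExp hrm c) 1 := by
  rw [diagP, diagExp, monomial_sum_one]
  refine Finset.prod_congr rfl fun j _ => ?_
  rw [dif_pos (j.2.trans_le hrm)]
  rfl

theorem diagP_dvd_monomial_iff (K : Type*) [Field K] (hrm : r ≤ m) (c : Fin r → Fin n)
    (d : Fin m × Fin n →₀ ℕ) : diagP K m n c ∣ monomial d 1 ↔ diagExp hrm c ≤ d := by
  simp [diagP_eq_monomial K hrm, monomial_dvd_monomial]

theorem monomial_mem_JIdeal_pow_iff (K : Type*) [Field K] {a k : ℕ} (hrm : r ≤ m)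
    (d : Fin m × Fin n →₀ ℕ) :
    monomial d (1 : K) ∈ JIdeal K m n r a ^ k ↔
      ∃ D : Fin k → Fin r → Fin n,
        (∀ i, NEcols n r a (D i)) ∧ ∑ i, diagExp hrm (D i) ≤ d := by
  have hJ : JIdeal K m n r a =
      Ideal.span ((monomial · 1) '' {e | ∃ c, NEcols n r a c ∧ diagExp hrm c = e}) := by
    rw [JIdeal]
    congr 1
    ext f
    simp [diagP_eq_monomial K hrm, eq_comm]
  rw [hJ, monomial_mem_span_image_pow_iff]
  constructor
  · rintro ⟨f, hf, hfd⟩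
    choose D hD hDf using hf
    exact ⟨D, hD, by simpa only [hDf] using hfd⟩
  · rintro ⟨D, hD, hDd⟩
    exact ⟨_, fun i => ⟨D i, hD i, rfl⟩, hDd⟩

end Diagonals

theorem exists_diagFamily_add_diagExp_le {m n k t u b : ℕ} (htu : t ≤ u) (hum : u ≤ m)
    {d : Fin m × Fin n →₀ ℕ} {D : Fin k → Fin u → Fin n} (hD : ∀ i, NEcols n u b (D i))
    (hDd : ∑ i, diagExp hum (D i) ≤ d) {E : Fin (k + 1) → Fin t → Fin n}
    (hE : ∀ i, NEcols n t b (E i)) (hEd : ∑ i, diagExp (htu.trans hum) (E i) ≤ d)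
    {c : Fin t → Fin n} (hcd : diagExp (htu.trans hum) c ≤ d) (hEc : ∀ i, E i ≤ c) :
    ∃ D' : Fin k → Fin u → Fin n, (∀ l, NEcols n u b (D' l)) ∧
      ∑ l, diagExp hum (D' l) + diagExp (htu.trans hum) c ≤ d := by
  refine ⟨fun l => minOnPrefix (rowSort D l) (rowSort E l.castSucc),
    fun l => ⟨?_, fun j => ?_⟩, ?_⟩
  · exact (strictMono_rowSort (fun i => (hD i).1) l).minOnPrefix
      (strictMono_rowSort (fun i => (hE i).1) _)
  · have hDb : b ≤ ((rowSort D l j : Fin n) : ℕ) + 1 := (hD _).2 j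
    simp only [minOnPrefix]
    split_ifs with hj
    · have hEb : b ≤ ((rowSort E l.castSucc ⟨j, hj⟩ : Fin n) : ℕ) + 1 := (hE _).2 _
      rw [Fin.coe_min]
      omega
    · exact hDb
  · rw [le_iff_forall_castLE_le hum fun p hp => by
      simp [diagExp_apply_of_le, hp, htu.trans hp]]
    intro j v
    rw [Finsupp.add_apply, sum_diagExp_apply_castLE]
    by_cases hj : (j : ℕ) < t
    · rw [show Fin.castLE hum j = Fin.castLE (htu.trans hum) ⟨j, hj⟩ from rfl,
        diagExp_apply_castLE]
      simp only [minOnPrefix, dif_pos hj]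
      exact card_filter_min_castSucc_add_le (monotone_rowSort D j) (monotone_rowSort E _)
        (fun l => hEc _ _)
        (fun v => (card_rowSort_eq D j v).trans_le ((sum_diagExp_le_iff hum D d).1 hDd j v))
        (fun v => (card_rowSort_eq E _ v).trans_le ((sum_diagExp_le_iff _ E d).1 hEd _ v))
        ((diagExp_le_iff _ c d).1 hcd ⟨j, hj⟩) v
    · simp only [minOnPrefix, dif_neg hj, add_zero,
        diagExp_apply_of_le _ c (p := (Fin.castLE hum j, v)) (not_lt.1 hj),
        card_rowSort_eq]
      exact (sum_diagExp_le_iff hum D d).1 hDd j v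

theorem IsSmallestDiagDividing.le_of_diagExp_le {K : Type*} [Field K] {m n t a : ℕ}
    {d : Fin m × Fin n →₀ ℕ} {c : Fin t → Fin n}
    (hc : IsSmallestDiagDividing K m n t a (monomial d 1) c) (htm : t ≤ m) {g : Fin t → Fin n}
    (hg : StrictMono g) (hgd : diagExp htm g ≤ d) : g ≤ c := by
  obtain ⟨hcNE, hcd, hcmax⟩ := hc
  have hsupNE : NEcols n t a (g ⊔ c) :=
    ⟨fun x y hxy => max_lt_max (hg hxy) (hcNE.1 hxy),
      fun j => (hcNE.2 j).trans (by simp)⟩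
  have hsupd : diagP K m n (g ⊔ c) ∣ monomial d 1 := by
    rw [diagP_dvd_monomial_iff K htm] at hcd ⊢
    rw [diagExp_le_iff] at hgd hcd ⊢
    intro j
    rcases max_choice (g j) (c j) with h | h
    · simpa [h] using hgd j
    · simpa [h] using hcd j
  rcases hcmax _ hsupNE hsupd with h | ⟨j, -, hj⟩
  · exact sup_eq_right.1 h
  · exact absurd hj (not_lt.2 le_sup_right)

theorem quotient_mem_pow_of_smallest_diag_general (K : Type*) [Field K] (m n : ℕ)
    (k t a u b : ℕ)
    (htu : t < u) (hum : u ≤ m)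
    (d : (Fin m × Fin n) →₀ ℕ)
    (hM : monomial d (1 : K) ∈
      JIdeal K m n u b ^ k ⊓ JIdeal K m n t b ^ (k + 1) ⊓ JIdeal K m n t a)
    (c : Fin t → Fin n)
    (hc : IsSmallestDiagDividing K m n t a (monomial d (1 : K)) c) :
    ∀ g : MvPolynomial (Fin m × Fin n) K,
      monomial d (1 : K) = diagP K m n c * g → g ∈ JIdeal K m n u b ^ k := by
  intro g hg
  have htm : t ≤ m := htu.le.trans hum
  obtain ⟨⟨hMu, hMt⟩, -⟩ := hM
  obtain ⟨D, hD, hDd⟩ := (monomial_mem_JIdeal_pow_iff K hum d).1 hMu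
  obtain ⟨E, hE, hEd⟩ := (monomial_mem_JIdeal_pow_iff K htm d).1 hMt
  have hcd : diagExp htm c ≤ d := (diagP_dvd_monomial_iff K htm c d).1 hc.2.1
  have hEc : ∀ i, E i ≤ c := fun i => hc.le_of_diagExp_le htm (hE i).1
    ((single_le_sum (fun _ _ => zero_le) (mem_univ i)).trans hEd)
  obtain ⟨D', hD', hD'd⟩ := exists_diagFamily_add_diagExp_le htu.le hum hD hDd hE hEd hcd hEc
  have hsplit :
      monomial (diagExp htm c) 1 * monomial (d - diagExp htm c) 1 = monomial d (1 : K) := by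
    rw [monomial_mul, one_mul, add_tsub_cancel_of_le hcd]
  rw [diagP_eq_monomial K htm] at hg
  rw [mul_left_cancel₀ (monomial_eq_zero.not.2 one_ne_zero) (hg.symm.trans hsplit.symm),
    monomial_mem_JIdeal_pow_iff K hum]
  exact ⟨D', hD', le_tsub_of_add_le_right hD'd⟩

/-- Lemma `easy`. Let `b ≤ a`, `u > t`. If the monomial `M = X^d` lies in
`J_u(b)^k ∩ J_t(b)^{k+1} ∩ J_t(a)` and `F` is the lexicographically smallest diagonal of
type `(t,a)` dividing `M`, then `M/F ∈ J_u(b)^k`. -/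
theorem quotient_mem_pow_of_smallest_diag (K : Type*) [Field K] (m n : ℕ)
    (hm : 1 ≤ m) (hmn : m ≤ n) (k t a u b : ℕ)
    (ht : 1 ≤ t) (hb : 1 ≤ b) (hba : b ≤ a) (htu : t < u) (hum : u ≤ m)
    (hta : t + a ≤ n + 1) (hub : u + b ≤ n + 1)
    (d : (Fin m × Fin n) →₀ ℕ)
    (hM : monomial d (1 : K) ∈
      JIdeal K m n u b ^ k ⊓ JIdeal K m n t b ^ (k + 1) ⊓ JIdeal K m n t a)
    (c : Fin t → Fin n)
    (hc : IsSmallestDiagDividing K m n t a (monomial d (1 : K)) c) :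
    ∀ g : MvPolynomial (Fin m × Fin n) K,
      monomial d (1 : K) = diagP K m n c * g → g ∈ JIdeal K m n u b ^ k :=
  quotient_mem_pow_of_smallest_diag_general K m n k t a u b htu hum d hM c hc
end

section
/- Let A be a Noetherian integral domain and let P_1,…,P_r be nonzero prime ideals of A. Then each P_i is an associated prime of the A-module A/(P_1⋯P_r). -/
/-!
Write `∏ j, P j = P i * Q` with `Q` the product of the other primes; `Q ≠ 0` since `A` is a
domain. By Cayley–Hamilton (the determinant trick) applied to multiplication by `a` on the
finitely generated, faithful module `Q`, the inclusion `a Q ⊆ P i * Q` forces `a ∈ P i`, so the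
annihilator of the submodule `Q / (P i * Q)` of `A / (P i * Q)` is exactly `P i`. A prime that is
minimal over the annihilator of a finite module over a Noetherian ring is an associated prime.
-/

theorem Module.mem_radical_sup_annihilator_of_smul_mem_smul_top {R M : Type*} [CommRing R]
    [AddCommGroup M] [Module R M] [Module.Finite R M] {I : Ideal R} {a : R}
    (h : ∀ m : M, a • m ∈ I • (⊤ : Submodule R M)) :
    a ∈ (I ⊔ Module.annihilator R M).radical := by
  obtain ⟨p, hmonic, -, hcoeff, heval⟩ :=
    LinearMap.exists_monic_and_natDegree_eq_and_coeff_mem_pow_and_aeval_eq_zero R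
      (algebraMap R (Module.End R M) a) I (by rintro _ ⟨m, rfl⟩; exact h m)
  have hann : p.eval a ∈ Module.annihilator R M := by
    rw [Polynomial.aeval_algebraMap_apply, Polynomial.coe_aeval_eq_eval] at heval
    exact Module.mem_annihilator.mpr fun m ↦ by simpa using congr($heval m)
  have hlower : ∑ k ∈ Finset.range p.natDegree, p.coeff k * a ^ k ∈ I :=
    Ideal.sum_mem _ fun k hk ↦ Ideal.mul_mem_right _ _ <|
      Ideal.pow_le_self (Nat.sub_ne_zero_of_lt (Finset.mem_range.mp hk)) (hcoeff k)
  have hsplit :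
      p.eval a = ∑ k ∈ Finset.range p.natDegree, p.coeff k * a ^ k + a ^ p.natDegree := by
    rw [Polynomial.eval_eq_sum_range, Finset.sum_range_succ, hmonic.coeff_natDegree, one_mul]
  refine ⟨p.natDegree, ?_⟩
  rw [eq_sub_of_add_eq' hsplit.symm]
  exact Ideal.sub_mem _ (Ideal.mem_sup_right hann) (Ideal.mem_sup_left hlower)

theorem Ideal.annihilator_eq_bot_of_ne_bot {A : Type*} [CommRing A] [IsDomain A] {Q : Ideal A}
    (hQ : Q ≠ ⊥) : Module.annihilator A Q = ⊥ := by
  obtain ⟨q, hq, hq0⟩ := Submodule.exists_mem_ne_zero_of_ne_bot hQ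
  refine (Submodule.eq_bot_iff _).mpr fun a ha ↦ ?_
  have : a * q = 0 := congr_arg Subtype.val (Module.mem_annihilator.mp ha ⟨q, hq⟩)
  exact (mul_eq_zero.mp this).resolve_right hq0

theorem Ideal.IsPrime.colon_mul_eq {A : Type*} [CommRing A] [IsDomain A] {P Q : Ideal A}
    (hP : P.IsPrime) (hQ : Q ≠ ⊥) (hfg : Q.FG) : (P * Q).colon (Q : Set A) = P := by
  refine le_antisymm (fun a ha ↦ ?_) fun a ha ↦ Submodule.mem_colon.mpr fun q hq ↦
    Ideal.mul_mem_mul ha hq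
  have : Module.Finite A Q := Module.Finite.iff_fg.mpr hfg
  have hmap : (P • (⊤ : Submodule A Q)).map Q.subtype = P * Q := by
    rw [Submodule.map_smul'', Submodule.map_top, Submodule.range_subtype, Ideal.smul_eq_mul]
  have hsmul : ∀ q : Q, a • q ∈ P • (⊤ : Submodule A Q) := fun q ↦ by
    obtain ⟨y, hy, hyq⟩ : Q.subtype (a • q) ∈ (P • (⊤ : Submodule A Q)).map Q.subtype :=
      hmap ▸ Submodule.mem_colon.mp ha q q.2
    rwa [← Q.injective_subtype hyq]
  simpa [Ideal.annihilator_eq_bot_of_ne_bot hQ, hP.radical] using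
    Module.mem_radical_sup_annihilator_of_smul_mem_smul_top hsmul

theorem Ideal.IsPrime.isAssociatedPrime_quotient_mul {A : Type*} [CommRing A] [IsDomain A]
    [IsNoetherianRing A] {P Q : Ideal A} (hP : P.IsPrime) (hQ : Q ≠ ⊥) :
    IsAssociatedPrime P (A ⧸ P * Q) := by
  let N : Submodule A (A ⧸ P * Q) := Submodule.map (P * Q).mkQ Q
  have hann : N.annihilator = P := by
    rw [Submodule.annihilator_map_mkQ_eq_colon,
      hP.colon_mul_eq hQ (IsNoetherian.noetherian Q)]
  have hmin : P ∈ N.annihilator.minimalPrimes := by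
    rw [hann, Ideal.minimalPrimes_eq_subsingleton_self]; rfl
  exact (Module.associatedPrimes.minimalPrimes_annihilator_subset_associatedPrimes A N
    hmin).map_of_injective N.subtype N.injective_subtype

/-- Let `A` be a Noetherian integral domain and `P 0, …, P (r-1)` nonzero
prime ideals of `A`. Then each `P i` is an associated prime of `A/(P 0 ⋯ P (r-1))`. -/
theorem isAssociatedPrime_of_prod_primes (A : Type*) [CommRing A] [IsDomain A]
    [IsNoetherianRing A] (r : ℕ) (P : Fin r → Ideal A)
    (hprime : ∀ i, (P i).IsPrime) (hne : ∀ i, P i ≠ ⊥) (i : Fin r) :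
    IsAssociatedPrime (P i) (A ⧸ (∏ j, P j)) := by
  classical
  have hsplit : ∏ j, P j = P i * ∏ j ∈ Finset.univ.erase i, P j :=
    (Finset.mul_prod_erase _ _ (Finset.mem_univ i)).symm
  have hrest : ∏ j ∈ Finset.univ.erase i, P j ≠ ⊥ :=
    Finset.prod_ne_zero_iff.mpr fun j _ ↦ hne j
  rw [hsplit]
  exact (hprime i).isAssociatedPrime_quotient_mul hrest
end

section
/- Let S = ((t_1,a_1),…,(t_w,a_w)) be a NE-pattern ordered so that a_i ≤ a_j for i < j and t_i ≥ t_j whenever i < j and a_i = a_j, and let M·Δ, Δ = δ_1⋯δ_w, be a NE-tableau of pattern S that is not S-canonical. Then at least one of the following holds: (1) there exist a variable x_{ij} dividing M and an index k such that x_{ij}·δ_k is not a canonical NE-tableau of the one-element pattern ((t_k,a_k)); or (2) there exist indices q < k such that δ_q·δ_k is not a canonical NE-tableau of the pattern ((t_q,a_q),(t_k,a_k)). -/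
open MvPolynomial

/-- Canonicity condition for the NE-tableau `X^d · δ_1 ⋯ δ_w` of pattern
`((t 0, a 0), …, (t (w-1), a (w-1)))`, where `δ_j` is the minor with columns `c j`:
for every `j`, the diagonal `in(δ_j)` is the lexicographically smallest diagonal of type
`(t j, a j)` dividing the monomial `X^d · in(δ_1) ⋯ in(δ_j)`. -/
def CanonicalData (K : Type*) [Field K] (m n : ℕ) {w : ℕ} (t a : Fin w → ℕ)
    (d : (Fin m × Fin n) →₀ ℕ) (c : ∀ j : Fin w, Fin (t j) → Fin n) : Prop :=
  ∀ j : Fin w, IsSmallestDiagDividing K m n (t j) (a j)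
    (monomial d (1 : K) * ∏ i : Fin w, if i ≤ j then diagP K m n (c i) else 1) (c j)

/-- An `S`-canonical NE-tableau of pattern `((t 0, a 0), …, (t (w-1), a (w-1)))`:
a product of a monomial `X^d` and minors `δ_j` of the prescribed types satisfying
the canonicity condition. -/
def IsCanonicalTableau (K : Type*) [Field K] (m n : ℕ) {w : ℕ} (t a : Fin w → ℕ)
    (f : MvPolynomial (Fin m × Fin n) K) : Prop :=
  ∃ (d : (Fin m × Fin n) →₀ ℕ) (c : ∀ j : Fin w, Fin (t j) → Fin n),
    (∀ j, NEcols n (t j) (a j) (c j)) ∧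
    f = monomial d (1 : K) * ∏ j, minorP K m n (c j) ∧
    CanonicalData K m n t a d c

/-! If `in(δ_j)` is not the smallest diagonal dividing `M·in(δ_1)⋯in(δ_j)`, a lexicographically
larger diagonal `c'` of the same type divides it. Replacing the entry of `c_j` in the last row `ℓ`
with `c_j ℓ < c' ℓ` by `c' ℓ` keeps the columns increasing and still gives a larger diagonal. The
variable `x_{ℓ, c' ℓ}` does not divide `in(δ_j)`, so, being prime, it divides `M` or some earlier
`in(δ_i)`; the exchanged diagonal then divides `x_{ℓ, c' ℓ}·in(δ_j)`, resp. `in(δ_i)·in(δ_j)`,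
and contradicts the canonicity of that one- or two-element tableau. -/

section DiagonalExchange

open Function Finset

theorem StrictMono.exists_update_strictMono {ι α : Type*} [LinearOrder ι] [Fintype ι]
    [LinearOrder α] {c c' : ι → α} (hc : StrictMono c) (hc' : StrictMono c')
    (h : ∃ r, c r < c' r) : ∃ ℓ, c ℓ < c' ℓ ∧ StrictMono (update c ℓ (c' ℓ)) := by
  classical
  obtain ⟨r, hr⟩ := h
  -- Take `ℓ` maximal with `c ℓ < c' ℓ`; beyond it `c' ≤ c`, so `c' ℓ < c' s ≤ c s` for `ℓ < s`.
  obtain ⟨ℓ, hℓ, hmax⟩ :=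
    (univ.filter fun r => c r < c' r).exists_max_image id ⟨r, by simpa using hr⟩
  have hℓ : c ℓ < c' ℓ := (mem_filter.1 hℓ).2
  have hbeyond : ∀ s, ℓ < s → c' s ≤ c s := fun s hs =>
    not_lt.1 fun h => (hmax s (by simpa using h)).not_gt hs
  refine ⟨ℓ, hℓ, fun r s hrs => ?_⟩
  by_cases hr : r = ℓ <;> by_cases hs : s = ℓ
  · subst hr hs; exact absurd hrs (lt_irrefl _)
  · subst hr; rw [update_self, update_of_ne hs]; exact (hc' hrs).trans_le (hbeyond s hrs)
  · subst hs; rw [update_self, update_of_ne hr]; exact (hc hrs).trans hℓ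
  · rw [update_of_ne hr, update_of_ne hs]; exact hc hrs

theorem NEcols.exists_update {n t a : ℕ} {c c' : Fin t → Fin n} (hc : NEcols n t a c)
    (hc' : NEcols n t a c') (hlt : toLex c < toLex c') :
    ∃ ℓ, c ℓ < c' ℓ ∧ NEcols n t a (update c ℓ (c' ℓ)) := by
  obtain ⟨r, -, hr⟩ := hlt
  obtain ⟨ℓ, hℓ, hmono⟩ := hc.1.exists_update_strictMono hc'.1 ⟨r, hr⟩
  exact ⟨ℓ, hℓ, hmono, (forall_update_iff c fun j b => a ≤ (b : ℕ) + 1).2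
    ⟨hc'.2 ℓ, fun j _ => hc.2 j⟩⟩

variable {K : Type*} [Field K] {m n : ℕ}

theorem isSmallestDiagDividing_iff {t a : ℕ} {M : MvPolynomial (Fin m × Fin n) K}
    {c : Fin t → Fin n} :
    IsSmallestDiagDividing K m n t a M c ↔ NEcols n t a c ∧ diagP K m n c ∣ M ∧
      ∀ c', NEcols n t a c' → diagP K m n c' ∣ M → toLex c' ≤ toLex c := by
  simp only [IsSmallestDiagDividing, le_iff_lt_or_eq, toLex_inj]
  exact and_congr_right' <| and_congr_right' <| forall₃_congr fun _ _ _ => or_comm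

theorem IsSmallestDiagDividing.of_dvd {t a : ℕ} {M M' : MvPolynomial (Fin m × Fin n) K}
    {c : Fin t → Fin n} (h : IsSmallestDiagDividing K m n t a M' c) (hM : M ∣ M')
    (hcM : diagP K m n c ∣ M) : IsSmallestDiagDividing K m n t a M c :=
  ⟨h.1, hcM, fun c' hc' hc'M => h.2.2 c' hc' (hc'M.trans hM)⟩

theorem X_dvd_diagP_iff {t : ℕ} (ht : t ≤ m) (c : Fin t → Fin n) (p : Fin m × Fin n) :
    (X p : MvPolynomial (Fin m × Fin n) K) ∣ diagP K m n c ↔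
      ∃ r : Fin t, (r : ℕ) = p.1 ∧ c r = p.2 := by
  rw [diagP, X_prime.dvd_finsetProd_iff]
  refine exists_congr fun r => ?_
  rw [dif_pos (r.2.trans_le ht), X_dvd_X, Prod.ext_iff, Fin.ext_iff]
  simp [eq_comm]

theorem diagP_update_dvd {t : ℕ} (c : Fin t → Fin n) (ℓ : Fin t) (b : Fin n)
    (hℓ : (ℓ : ℕ) < m) :
    diagP K m n (update c ℓ b) ∣ X (⟨ℓ, hℓ⟩, b) * diagP K m n c := by
  unfold diagP
  rw [← mul_prod_erase _ _ (mem_univ ℓ), ← mul_prod_erase univ _ (mem_univ ℓ),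
    prod_congr rfl fun r hr => by rw [update_of_ne (ne_of_mem_erase hr)]]
  simp only [dif_pos hℓ, update_self]
  exact mul_dvd_mul_left _ (dvd_mul_left _ _)

theorem X_dvd_monomial_mul_prod_iff {ι : Type*} (d : (Fin m × Fin n) →₀ ℕ) (s : Finset ι)
    (f : ι → MvPolynomial (Fin m × Fin n) K) (v : Fin m × Fin n) :
    X v ∣ monomial d (1 : K) * ∏ i ∈ s, f i ↔ d v ≠ 0 ∨ ∃ i ∈ s, X v ∣ f i := by
  rw [X_prime.dvd_mul, X_prime.dvd_finsetProd_iff, X_dvd_monomial]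
  simp

theorem isSmallestDiagDividing_mul_diagP {t a : ℕ} (ht : t ≤ m)
    {P : MvPolynomial (Fin m × Fin n) K} {c : Fin t → Fin n} (hc : NEcols n t a c)
    (hP : ∀ v, X v ∣ P → IsSmallestDiagDividing K m n t a (X v * diagP K m n c) c) :
    IsSmallestDiagDividing K m n t a (P * diagP K m n c) c := by
  refine isSmallestDiagDividing_iff.2 ⟨hc, dvd_mul_left _ _, fun c' hc' hc'P =>
    not_lt.1 fun hlt => ?_⟩
  obtain ⟨ℓ, hℓ, hexch⟩ := hc.exists_update hc' hlt
  set v : Fin m × Fin n := (⟨ℓ, ℓ.2.trans_le ht⟩, c' ℓ)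
  have hvc' : (X v : MvPolynomial (Fin m × Fin n) K) ∣ diagP K m n c' :=
    (X_dvd_diagP_iff ht c' v).2 ⟨ℓ, rfl, rfl⟩
  have hvP : X v ∣ P := by
    refine (X_prime.dvd_or_dvd (hvc'.trans hc'P)).resolve_right fun hvc => ?_
    obtain ⟨r, hr, hcr⟩ := (X_dvd_diagP_iff ht c v).1 hvc
    obtain rfl : r = ℓ := Fin.ext hr
    exact hℓ.ne hcr
  have hle := (isSmallestDiagDividing_iff.1 (hP v hvP)).2.2 _ hexch
    (diagP_update_dvd c ℓ (c' ℓ) _)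
  exact (Pi.lt_toLex_update_self_iff.2 hℓ).not_ge hle

end DiagonalExchange

theorem not_canonical_cases_general (K : Type*) [Field K] (m n : ℕ)
    (w : ℕ) (t a : Fin w → ℕ) (hval : ∀ j, ValidPair m n (t j, a j))
    (d : (Fin m × Fin n) →₀ ℕ) (c : ∀ j : Fin w, Fin (t j) → Fin n)
    (hc : ∀ j, NEcols n (t j) (a j) (c j))
    (hnc : ¬ CanonicalData K m n t a d c) :
    (∃ (p : Fin m × Fin n) (k : Fin w), d p ≠ 0 ∧
        ¬ IsSmallestDiagDividing K m n (t k) (a k) (X p * diagP K m n (c k)) (c k)) ∨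
    (∃ q k : Fin w, q < k ∧
        ¬ (IsSmallestDiagDividing K m n (t q) (a q) (diagP K m n (c q)) (c q) ∧
           IsSmallestDiagDividing K m n (t k) (a k)
             (diagP K m n (c q) * diagP K m n (c k)) (c k))) := by
  by_contra! hcon
  obtain ⟨hvar, hpair⟩ := hcon
  refine hnc fun j => ?_
  have hsplit : (∏ i : Fin w, if i ≤ j then diagP K m n (c i) else 1) =
      (∏ i ∈ Finset.Iio j, diagP K m n (c i)) * diagP K m n (c j) := by
    rw [← Finset.prod_filter, Finset.filter_ge_eq_Iic, Finset.prod_Iio_mul_eq_prod_Iic]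
  rw [hsplit, ← mul_assoc]
  refine isSmallestDiagDividing_mul_diagP (hval j).2.2.1 (hc j) fun v hv => ?_
  rcases (X_dvd_monomial_mul_prod_iff d _ _ v).1 hv with hd | ⟨i, hi, hvi⟩
  · exact hvar v j hd
  · exact (hpair i j (Finset.mem_Iio.1 hi)).2.of_dvd (mul_dvd_mul_right hvi _)
      (dvd_mul_left _ _)

/-- Lemma 4. Let `S` be a NE-pattern and `X^d · δ_1 ⋯ δ_w` a NE-tableau
of pattern `S` (with `δ_j` the minor with columns `c j`) which is not `S`-canonical. Then
(1) there are a variable `x_p` dividing `X^d` and an index `k` such that `x_p · δ_k` is not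
a canonical NE-tableau of pattern `((t k, a k))`, or (2) there are indices `q < k` such
that `δ_q · δ_k` is not a canonical NE-tableau of pattern `((t q, a q), (t k, a k))`. -/
theorem not_canonical_cases (K : Type*) [Field K] (m n : ℕ) (hm : 1 ≤ m) (hmn : m ≤ n)
    (w : ℕ) (t a : Fin w → ℕ) (hval : ∀ j, ValidPair m n (t j, a j))
    (hord : ∀ i j : Fin w, i < j → a i ≤ a j ∧ (a i = a j → t j ≤ t i))
    (d : (Fin m × Fin n) →₀ ℕ) (c : ∀ j : Fin w, Fin (t j) → Fin n)
    (hc : ∀ j, NEcols n (t j) (a j) (c j))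
    (hnc : ¬ CanonicalData K m n t a d c) :
    (∃ (p : Fin m × Fin n) (k : Fin w), d p ≠ 0 ∧
        ¬ IsSmallestDiagDividing K m n (t k) (a k) (X p * diagP K m n (c k)) (c k)) ∨
    (∃ q k : Fin w, q < k ∧
        ¬ (IsSmallestDiagDividing K m n (t q) (a q) (diagP K m n (c q)) (c q) ∧
           IsSmallestDiagDividing K m n (t k) (a k)
             (diagP K m n (c q) * diagP K m n (c k)) (c k))) :=
  not_canonical_cases_general K m n w t a hval d c hc hnc
end

section
/- Let t_1 ≥ t_2 ≥ … ≥ t_p be positive integers with t_1 ≤ m and let Δ = δ_1⋯δ_p be a tableau of shape (t_1,…,t_p), i.e., each δ_i is a t_i-minor of the first t_i rows of X. Then there exists a unique standard tableau Σ = σ_1⋯σ_p of the same shape (t_1,…,t_p) such that in(Δ) = in(Σ), where in(δ_1⋯δ_p) = in(δ_1)⋯in(δ_p) is the product of the diagonals of the factors. -/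
open MvPolynomial

/-!
The monomial `in(Δ)` records, for every `k`, the multiset of the `k`-th entries of the
rows of `Δ`, i.e. the `k`-th column of the tableau. A tableau is standard exactly when
its columns are weakly increasing, so a standard tableau is determined by these multisets,
and sorting every column of `Δ` gives one. Sorting keeps the rows strictly increasing:
the `k`-th column of `Δ` lies entrywise strictly below the `(k+1)`-th on the rows that
reach it, and the `i`-th smallest entries inherit this strict inequality by counting.
-/

open Finset

theorem Multiset.count_map_univ_val {ι β : Type*} [Fintype ι] [DecidableEq β] (f : ι → β)
    (b : β) : (univ.val.map f).count b = #{i | f i = b} := by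
  rw [Multiset.count_map, card_def, filter_val]
  simp only [eq_comm]

namespace Tuple

variable {p : ℕ} {α : Type*}

theorem eq_of_monotone_of_map_univ_val_eq [PartialOrder α] {f g : Fin p → α}
    (hf : Monotone f) (hg : Monotone g) (h : univ.val.map f = univ.val.map g) : f = g := by
  rw [Fin.univ_val_map, Fin.univ_val_map, Multiset.coe_eq_coe] at h
  exact List.ofFn_injective (h.eq_of_pairwise' hf.sortedLE_ofFn.pairwise hg.sortedLE_ofFn.pairwise)

variable [LinearOrder α]

theorem map_univ_val_comp_sort (f : Fin p → α) :
    univ.val.map (f ∘ sort f) = univ.val.map f := by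
  rw [← Multiset.map_map, Multiset.map_univ_val_equiv]

theorem card_filter_comp_sort (f : Fin p → α) (P : α → Prop) [DecidablePred P] :
    #{j | P ((f ∘ sort f) j)} = #{j | P (f j)} := by
  simp only [card_filter, Function.comp_apply]
  exact Equiv.sum_comp (sort f) fun j => if P (f j) then 1 else 0

theorem comp_sort_lt_comp_sort {f g : Fin p → α} {i : Fin p}
    (h : ∀ j, g j ≤ (g ∘ sort g) i → f j < g j) : (f ∘ sort f) i < (g ∘ sort g) i := by
  set v := (g ∘ sort g) i
  rw [← lt_card_lt_iff_apply_lt_of_monotone (monotone_sort f), card_filter_comp_sort f (· < v)]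
  calc (i : ℕ) < #{j | (g ∘ sort g) j ≤ v} :=
        (lt_card_le_iff_apply_le_of_monotone (monotone_sort g)).2 le_rfl
    _ = #{j | g j ≤ v} := card_filter_comp_sort g (· ≤ v)
    _ ≤ #{j | f j < v} := card_le_card fun j hj => by
        simp only [mem_filter_univ] at hj ⊢
        exact (h j hj).trans_le hj

end Tuple

namespace Tableau

section Columns

variable {p : ℕ} {t : Fin p → ℕ} {α : Type*}

/-- Padding by `⊤` puts the rows too short to reach column `k` last, so that the columns of a
standard tableau are monotone. -/
def column (d : ∀ i : Fin p, Fin (t i) → α) (k : ℕ) (i : Fin p) : WithTop α :=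
  if h : k < t i then d i ⟨k, h⟩ else ⊤

def IsStandard [LE α] (hdec : Antitone t) (d : ∀ i : Fin p, Fin (t i) → α) : Prop :=
  ∀ (i j : Fin p) (hij : i ≤ j) (k : Fin (t j)), d i (Fin.castLE (hdec hij) k) ≤ d j k

variable {d : ∀ i : Fin p, Fin (t i) → α} {k : ℕ} {i : Fin p}

theorem column_of_lt (h : k < t i) : column d k i = d i ⟨k, h⟩ := dif_pos h

theorem column_eq_top_iff : column d k i = ⊤ ↔ t i ≤ k := by
  unfold column
  split_ifs with h <;> simp <;> omega

theorem card_column_lt_top [LinearOrder α] : #{j | column d k j < ⊤} = #{j | k < t j} := by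
  simp only [lt_top_iff_ne_top, ne_eq, column_eq_top_iff, not_le]

theorem column_lt_column [Preorder α] (hd : ∀ i, StrictMono (d i)) {l : ℕ} (hkl : k < l)
    (h : column d l i ≠ ⊤) : column d k i < column d l i := by
  have hl : l < t i := not_le.1 (column_eq_top_iff.not.1 h)
  rw [column_of_lt (hkl.trans hl), column_of_lt hl, WithTop.coe_lt_coe]
  exact hd i (Fin.mk_lt_mk.2 hkl)

theorem isStandard_iff_monotone_column [Preorder α] {hdec : Antitone t} :
    IsStandard hdec d ↔ ∀ k, Monotone (column d k) := by
  constructor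
  · intro hd k i j hij
    unfold column
    split_ifs with hi hj hj
    · exact WithTop.coe_le_coe.2 (hd i j hij ⟨k, hj⟩)
    · exact le_top
    · exact absurd (hj.trans_le (hdec hij)) hi
    · exact le_rfl
  · intro hd i j hij k
    have := hd k hij
    rwa [column_of_lt (k.2.trans_le (hdec hij)), column_of_lt k.2, WithTop.coe_le_coe] at this

theorem eq_of_isStandard_of_map_column_eq [PartialOrder α] (hdec : Antitone t)
    {σ τ : ∀ i : Fin p, Fin (t i) → α} (hσ : IsStandard hdec σ) (hτ : IsStandard hdec τ)
    (h : ∀ k, univ.val.map (column σ k) = univ.val.map (column τ k)) : σ = τ := by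
  funext i k
  have := congr_fun (Tuple.eq_of_monotone_of_map_univ_val_eq
    (isStandard_iff_monotone_column.1 hσ k) (isStandard_iff_monotone_column.1 hτ k) (h k)) i
  rwa [column_of_lt k.2, column_of_lt k.2, WithTop.coe_inj] at this

theorem exists_isStandard_map_column_eq [LinearOrder α] (hdec : Antitone t)
    (c : ∀ i : Fin p, Fin (t i) → α) (hc : ∀ i, StrictMono (c i)) :
    ∃ σ : ∀ i : Fin p, Fin (t i) → α, (∀ i, StrictMono (σ i)) ∧ IsStandard hdec σ ∧
      ∀ k, univ.val.map (column σ k) = univ.val.map (column c k) := by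
  set s : ℕ → Fin p → WithTop α := fun k => column c k ∘ Tuple.sort (column c k)
  have hs_lt_top : ∀ k i, s k i < ⊤ ↔ k < t i := fun k i => by
    rw [← Tuple.lt_card_lt_iff_apply_lt_of_monotone (Tuple.monotone_sort _),
      Tuple.card_filter_comp_sort (column c k) (· < ⊤), card_column_lt_top,
      Tuple.lt_card_gt_iff_apply_gt_of_antitone hdec]
  let σ : ∀ i : Fin p, Fin (t i) → α := fun i k => (s k i).untop ((hs_lt_top k i).2 k.2).ne
  have hcolumn : ∀ k, column σ k = s k := fun k => funext fun i => by
    by_cases h : k < t i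
    · rw [column_of_lt h, WithTop.coe_untop]
    · rw [column_eq_top_iff.2 (not_lt.1 h), eq_comm, ← not_lt_top_iff, hs_lt_top]
      exact h
  refine ⟨σ, fun i k l hkl => ?_, isStandard_iff_monotone_column.2 fun k => ?_, fun k => ?_⟩
  · rw [← WithTop.coe_lt_coe, ← column_of_lt, ← column_of_lt, hcolumn, hcolumn]
    exact Tuple.comp_sort_lt_comp_sort fun j hj =>
      column_lt_column hc hkl (ne_top_of_le_ne_top ((hs_lt_top _ _).2 l.2).ne hj)
  · exact hcolumn k ▸ Tuple.monotone_sort _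
  · exact hcolumn k ▸ Tuple.map_univ_val_comp_sort _

end Columns

section Diagonal

variable {K : Type*} [Field K] {m n p : ℕ} {t : Fin p → ℕ}

theorem diagP_eq_monomial {s : ℕ} (hs : s ≤ m) (c : Fin s → Fin n) :
    diagP K m n c =
      monomial (∑ j : Fin s, Finsupp.single ((⟨j, j.2.trans_le hs⟩ : Fin m), c j) 1) 1 := by
  rw [diagP, monomial_sum_one]
  exact prod_congr rfl fun j _ => dif_pos _

noncomputable def diagExponent (ht : ∀ i, t i ≤ m) (d : ∀ i : Fin p, Fin (t i) → Fin n) :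
    Fin m × Fin n →₀ ℕ :=
  ∑ i, ∑ j : Fin (t i), Finsupp.single ((⟨j, j.2.trans_le (ht i)⟩ : Fin m), d i j) 1

theorem diagExponent_apply (ht : ∀ i, t i ≤ m) (d : ∀ i : Fin p, Fin (t i) → Fin n)
    (k : Fin m) (v : Fin n) : diagExponent ht d (k, v) = #{i | column d k i = v} := by
  rw [diagExponent, Finsupp.finsetSum_apply, card_eq_sum_ones, sum_filter]
  refine sum_congr rfl fun i _ => ?_
  rw [Finsupp.finsetSum_apply]
  simp only [Finsupp.single_apply, Prod.mk.injEq, Fin.ext_iff]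
  by_cases h : (k : ℕ) < t i
  · simp only [column_of_lt h, WithTop.coe_inj, Fin.ext_iff]
    rw [sum_eq_single ⟨k, h⟩ fun j _ hj => if_neg fun hj' => hj (Fin.ext hj'.1)] <;> simp
  · simp only [column_eq_top_iff.2 (not_lt.1 h), WithTop.top_ne_coe, if_false]
    exact sum_eq_zero fun j _ => if_neg fun _ => h (by omega)

theorem prod_diagP_eq_monomial (ht : ∀ i, t i ≤ m) (d : ∀ i : Fin p, Fin (t i) → Fin n) :
    ∏ i, diagP K m n (d i) = monomial (diagExponent ht d) 1 := by
  simp only [diagExponent, diagP_eq_monomial (ht _), monomial_sum_one]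

theorem prod_diagP_eq_prod_diagP_iff (ht : ∀ i, t i ≤ m)
    {d e : ∀ i : Fin p, Fin (t i) → Fin n} :
    ∏ i, diagP K m n (d i) = ∏ i, diagP K m n (e i) ↔
      ∀ k, univ.val.map (column d k) = univ.val.map (column e k) := by
  rw [prod_diagP_eq_monomial ht, prod_diagP_eq_monomial ht, monomial_left_inj one_ne_zero]
  simp only [Multiset.ext, Multiset.count_map_univ_val]
  constructor
  · intro h k w
    by_cases hk : k < m
    · induction w using WithTop.recTopCoe with
      | top => simp only [column_eq_top_iff]
      | coe v => simpa only [diagExponent_apply] using DFunLike.congr_fun h (⟨k, hk⟩, v)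
    · have hcolumn (d' : ∀ i : Fin p, Fin (t i) → Fin n) : column d' k = fun _ => ⊤ :=
        funext fun i => column_eq_top_iff.2 ((ht i).trans (not_lt.1 hk))
      rw [hcolumn d, hcolumn e]
  · intro h
    ext ⟨k, v⟩
    rw [diagExponent_apply, diagExponent_apply, h]

end Diagonal

end Tableau

theorem exists_unique_standard_tableau_general (K : Type*) [Field K] (m n : ℕ)
    (p : ℕ) (t : Fin p → ℕ)
    (hval : ∀ i, 1 ≤ t i ∧ t i ≤ m)
    (hdec : ∀ i j : Fin p, i ≤ j → t j ≤ t i)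
    (c : ∀ i : Fin p, Fin (t i) → Fin n) (hc : ∀ i, StrictMono (c i)) :
    ∃! σ : ∀ i : Fin p, Fin (t i) → Fin n,
      (∀ i, StrictMono (σ i)) ∧
      (∀ (i j : Fin p) (hij : i ≤ j) (k : Fin (t j)),
        σ i (Fin.castLE (hdec i j hij) k) ≤ σ j k) ∧
      ∏ i, diagP K m n (σ i) = ∏ i, diagP K m n (c i) := by
  have ht i : t i ≤ m := (hval i).2
  obtain ⟨σ, hσ, hstd, hcolumn⟩ := Tableau.exists_isStandard_map_column_eq hdec c hc
  refine ⟨σ, ⟨hσ, hstd, (Tableau.prod_diagP_eq_prod_diagP_iff ht).2 hcolumn⟩, ?_⟩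
  rintro τ ⟨-, hτ, hprod⟩
  exact Tableau.eq_of_isStandard_of_map_column_eq hdec hτ hstd fun k =>
    ((Tableau.prod_diagP_eq_prod_diagP_iff ht).1 hprod k).trans (hcolumn k).symm

/-- Proposition `uni-init`. Let `t_1 ≥ ⋯ ≥ t_p` (with `t_1 ≤ m`) and
let `Δ = δ_1⋯δ_p` be a tableau of shape `(t_1,…,t_p)`, the minor `δ_i` having (strictly
increasing) columns `c i`. Then there is a unique standard tableau `Σ = σ_1⋯σ_p` of
the same shape with `in(Δ) = in(Σ)`, standardness meaning `σ_i ≤_str σ_j` for `i ≤ j`,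
i.e. the `k`-th column of `σ_i` is `≤` the `k`-th column of `σ_j` for all `k ≤ t_j`. -/
theorem exists_unique_standard_tableau (K : Type*) [Field K] (m n : ℕ)
    (hm : 1 ≤ m) (hmn : m ≤ n) (p : ℕ) (t : Fin p → ℕ)
    (hval : ∀ i, 1 ≤ t i ∧ t i ≤ m)
    (hdec : ∀ i j : Fin p, i ≤ j → t j ≤ t i)
    (c : ∀ i : Fin p, Fin (t i) → Fin n) (hc : ∀ i, StrictMono (c i)) :
    ∃! σ : ∀ i : Fin p, Fin (t i) → Fin n,
      (∀ i, StrictMono (σ i)) ∧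
      (∀ (i j : Fin p) (hij : i ≤ j) (k : Fin (t j)),
        σ i (Fin.castLE (hdec i j hij) k) ≤ σ j k) ∧
      ∏ i, diagP K m n (σ i) = ∏ i, diagP K m n (c i) :=
  exists_unique_standard_tableau_general K m n p t hval hdec c hc
end
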